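/- arXiv:1901.07028 — 5 statements merged into one kernel-verified Lean document; each statement's English description precedes it below -/
import Mathlib

section
/- (Kotzig's theorem) Let G be a finite simple graph with a unique perfect matching M, and suppose G has at least one edge. Then M contains a bridge of G, i.e., an edge whose removal increases the number of connected components of G. -/
def IsPerfectMatching {V : Type*} (G : SimpleGraph V) (M : Set (Sym2 V)) : Prop :=
  M ⊆ G.edgeSet ∧ ∀ v : V, ∃! e, e ∈ M ∧ v ∈ e

namespace Kotzig
open SimpleGraph

variable {V : Type*} {G : SimpleGraph V} {M : Set (Sym2 V)}

/-- matching edge at a vertex, in endpoint form -/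
lemma pm_exists (hM : IsPerfectMatching G M) (v : V) :
    ∃ w, s(v, w) ∈ M ∧ G.Adj v w := by
  obtain ⟨e, ⟨heM, hve⟩, -⟩ := hM.2 v
  obtain ⟨w, rfl⟩ := Sym2.mem_iff_exists.mp hve
  exact ⟨w, heM, (G.mem_edgeSet).mp (hM.1 heM)⟩

lemma pm_unique (hM : IsPerfectMatching G M) {e e' : Sym2 V} {v : V}
    (he : e ∈ M) (he' : e' ∈ M) (hv : v ∈ e) (hv' : v ∈ e') : e = e' := by
  obtain ⟨u, -, hu⟩ := hM.2 v
  rw [hu e ⟨he, hv⟩, hu e' ⟨he', hv'⟩]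

lemma pm_partner_unique (hM : IsPerfectMatching G M) {v w w' : V}
    (h : s(v, w) ∈ M) (h' : s(v, w') ∈ M) : w = w' := by
  have := pm_unique hM h h' (Sym2.mem_mk_left v w) (Sym2.mem_mk_left v w')
  rw [Sym2.eq_iff] at this
  rcases this with ⟨-, rfl⟩ | ⟨rfl, rfl⟩ <;> rfl

/-- Reachability avoiding the two special edges `f` and `g`. -/
def Avoid (G : SimpleGraph V) (f g : Sym2 V) (u v : V) : Prop :=
  ∃ p : G.Walk u v, f ∉ p.edges ∧ g ∉ p.edges

namespace Avoid

variable {f g : Sym2 V}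

@[refl] lemma refl (u : V) : Avoid G f g u u := ⟨.nil, by simp, by simp⟩

lemma symm {u v : V} (h : Avoid G f g u v) : Avoid G f g v u := by
  obtain ⟨p, h1, h2⟩ := h
  exact ⟨p.reverse, by simpa using h1, by simpa using h2⟩

lemma trans {u v w : V} (h : Avoid G f g u v) (h' : Avoid G f g v w) : Avoid G f g u w := by
  obtain ⟨p, h1, h2⟩ := h; obtain ⟨q, h1', h2'⟩ := h'
  exact ⟨p.append q, by simp [Walk.edges_append, h1, h1'],
    by simp [Walk.edges_append, h2, h2']⟩

lemma step {u v : V} (h : G.Adj u v) (h1 : s(u, v) ≠ f) (h2 : s(u, v) ≠ g) :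
    Avoid G f g u v :=
  ⟨.cons h .nil, by simp [h1.symm], by simp [h2.symm]⟩

end Avoid

/-- Decomposition of a walk avoiding `f` in terms of `Avoid`-reachability and the
endpoints of `g`. -/
lemma walk_decomp {f : Sym2 V} {x y : V} {u v : V} (p : G.Walk u v)
    (hf : f ∉ p.edges) :
    Avoid G f s(x,y) u v ∨ (Avoid G f s(x,y) u x ∧ Avoid G f s(x,y) y v) ∨
      (Avoid G f s(x,y) u y ∧ Avoid G f s(x,y) x v) := by
  induction p with
  | nil => exact Or.inl (Avoid.refl _)
  | @cons u w v hadj q ih =>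
    rw [Walk.edges_cons, List.mem_cons] at hf
    push_neg at hf
    obtain ⟨hne, hfq⟩ := hf
    rcases eq_or_ne s(u, w) s(x,y) with hg | hg
    · rw [Sym2.eq_iff] at hg
      rcases hg with ⟨rfl, rfl⟩ | ⟨rfl, rfl⟩
      · -- u = x, w = y
        rcases ih hfq with h | ⟨h1, h2⟩ | ⟨h1, h2⟩
        · exact Or.inr (Or.inl ⟨Avoid.refl _, h⟩)
        · exact Or.inr (Or.inl ⟨Avoid.refl _, h2⟩)
        · exact Or.inl h2
      · -- u = y, w = x
        rcases ih hfq with h | ⟨h1, h2⟩ | ⟨h1, h2⟩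
        · exact Or.inr (Or.inr ⟨Avoid.refl _, h⟩)
        · exact Or.inl h2
        · exact Or.inr (Or.inr ⟨Avoid.refl _, h2⟩)
    · have hstep : Avoid G f s(x,y) u w := Avoid.step hadj hne.symm hg
      rcases ih hfq with h | ⟨h1, h2⟩ | ⟨h1, h2⟩
      · exact Or.inl (hstep.trans h)
      · exact Or.inr (Or.inl ⟨hstep.trans h1, h2⟩)
      · exact Or.inr (Or.inr ⟨hstep.trans h1, h2⟩)

/-- There is a matching of `G` covering exactly the vertex set `T`. -/
def MatchOn (G : SimpleGraph V) (T : Set V) : Prop :=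
  ∃ N : Set (Sym2 V), N ⊆ G.edgeSet ∧ (∀ e ∈ N, ∀ v ∈ e, v ∈ T) ∧
    ∀ v ∈ T, ∃! e, e ∈ N ∧ v ∈ e

lemma matchOn_of_closed (hM : IsPerfectMatching G M) (T : Set V)
    (hT : ∀ v ∈ T, ∀ w, s(v, w) ∈ M → w ∈ T) : MatchOn G T := by
  refine ⟨{e ∈ M | ∀ v ∈ e, v ∈ T}, fun e he => hM.1 he.1, fun e he => he.2, fun v hv => ?_⟩
  obtain ⟨w, hw, -⟩ := pm_exists hM v
  refine ⟨s(v, w), ⟨⟨hw, ?_⟩, Sym2.mem_mk_left v w⟩, ?_⟩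
  · intro z hz
    rw [Sym2.mem_iff] at hz
    rcases hz with rfl | rfl
    · exact hv
    · exact hT v hv z hw
  · rintro e ⟨⟨heM, -⟩, hve⟩
    exact pm_unique hM heM hw hve (Sym2.mem_mk_left v w)

lemma sym2_map_val_inj {S : Set V} : Function.Injective (Sym2.map (Subtype.val : ↥S → V)) :=
  Sym2.map.injective Subtype.val_injective

lemma mem_map_val {S : Set V} (e : Sym2 ↥S) (v : ↥S) (hv : v ∈ e) :
    (v : V) ∈ e.map Subtype.val := Sym2.mem_map.mpr ⟨v, hv, rfl⟩

lemma mem_of_mem_map_val {S : Set V} (e : Sym2 ↥S) (w : V) (hw : w ∈ e.map Subtype.val) :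
    ∃ v : ↥S, v ∈ e ∧ (v : V) = w := Sym2.mem_map.mp hw

/-- Lifting the matching to a subtype graph which is closed under matching partners. -/
lemma pm_restrict {S : Set V} (hM : IsPerfectMatching G M)
    (hcl : ∀ v : V, v ∈ S → ∀ w, s(v, w) ∈ M → w ∈ S)
    (H : SimpleGraph ↥S) (hH : ∀ u v : ↥S, G.Adj u v → H.Adj u v)
    (hHsub : ∀ e : Sym2 ↥S, e.map Subtype.val ∈ M → e ∈ H.edgeSet) :
    IsPerfectMatching H {e : Sym2 ↥S | e.map Subtype.val ∈ M} := by
  constructor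
  · intro e he
    exact hHsub e he
  · intro v
    obtain ⟨w, hw, hadj⟩ := pm_exists hM (v : V)
    have hwS : w ∈ S := hcl v v.2 w hw
    refine ⟨s(v, ⟨w, hwS⟩), ⟨by simpa using hw, Sym2.mem_mk_left _ _⟩, ?_⟩
    rintro e ⟨heM, hve⟩
    apply sym2_map_val_inj
    have : e.map Subtype.val = s((v:V), w) := by
      exact pm_unique hM heM hw (mem_map_val e v hve) (Sym2.mem_mk_left _ _)
    simpa using this

/-- Gluing an "all-genuine-edges" matching upstairs with the outside part of `M`
gives a perfect matching of `G`. -/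
lemma pm_glue {S : Set V} (hM : IsPerfectMatching G M)
    (hcl : ∀ v : V, v ∈ S → ∀ w, s(v, w) ∈ M → w ∈ S)
    (N : Set (Sym2 ↥S))
    (hsub : ∀ e ∈ N, e.map Subtype.val ∈ G.edgeSet)
    (hcov : ∀ v : ↥S, ∃! e, e ∈ N ∧ v ∈ e) :
    IsPerfectMatching G
      ((Sym2.map Subtype.val) '' N ∪ {e ∈ M | ∀ v ∈ e, v ∉ S}) := by
  constructor
  · rintro e (⟨e', he', rfl⟩ | he)
    · exact hsub e' he'
    · exact hM.1 he.1
  · intro v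
    by_cases hvS : v ∈ S
    · obtain ⟨e', ⟨he'N, hve'⟩, huniq⟩ := hcov ⟨v, hvS⟩
      refine ⟨e'.map Subtype.val, ⟨Or.inl ⟨e', he'N, rfl⟩, mem_map_val e' _ hve'⟩, ?_⟩
      rintro e ⟨(⟨e'', he''N, rfl⟩ | ⟨heM, hout⟩), hv⟩
      ·
        obtain ⟨v', hv'e, hv'val⟩ := mem_of_mem_map_val e'' v hv
        have : v' = ⟨v, hvS⟩ := Subtype.ext hv'val
        subst this
        rw [huniq e'' ⟨he''N, hv'e⟩]
      · exact absurd hvS (hout v hv)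
    · obtain ⟨w, hw, -⟩ := pm_exists hM v
      have hwS : w ∉ S := fun hwS => hvS (hcl w hwS v (Sym2.eq_swap ▸ hw))
      refine ⟨s(v, w), ⟨Or.inr ⟨hw, ?_⟩, Sym2.mem_mk_left _ _⟩, ?_⟩
      · intro z hz
        rw [Sym2.mem_iff] at hz
        rcases hz with rfl | rfl <;> assumption
      · rintro e ⟨(⟨e'', he''N, rfl⟩ | ⟨heM, -⟩), hv⟩
        · obtain ⟨v', -, hv'val⟩ := mem_of_mem_map_val e'' v hv
          exact absurd (hv'val ▸ v'.2) hvS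
        · exact pm_unique hM heM hw hv (Sym2.mem_mk_left _ _)

/-- If a matching upstairs consists of edges of `M` and covers everything, it must be
the full lift of `M`. -/
lemma pm_lift_unique {S : Set V} (hM : IsPerfectMatching G M)
    (N : Set (Sym2 ↥S))
    (hN : ∀ e ∈ N, e.map Subtype.val ∈ M)
    (hcov : ∀ v : ↥S, ∃! e, e ∈ N ∧ v ∈ e) :
    N = {e : Sym2 ↥S | e.map Subtype.val ∈ M} := by
  ext e
  constructor
  · exact fun he => hN e he
  · intro he
    induction e using Sym2.ind with
    | _ p q =>
      obtain ⟨e', ⟨he'N, hpe'⟩, -⟩ := hcov p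
      have : e'.map Subtype.val = (s(p,q) : Sym2 ↥S).map Subtype.val :=
        pm_unique hM (hN e' he'N) he (mem_map_val e' p hpe') (by simpa using Sym2.mem_mk_left _ _)
      rwa [sym2_map_val_inj this] at he'N

section Case1

variable {a b x y : V}

/-- Both `A \ {y}` and `B \ {x}` matchable gives a second perfect matching, contradiction. -/
lemma case1 (hM : IsPerfectMatching G M) (hU : ∀ M', IsPerfectMatching G M' → M' = M)
    (hfM : s(a,b) ∈ M) (hgE : s(x,y) ∈ G.edgeSet) (hgM : s(x,y) ∉ M)
    (hsep : ¬Avoid G s(a,b) s(x,y) a b)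
    (hay : Avoid G s(a,b) s(x,y) a y) (hbx : Avoid G s(a,b) s(x,y) b x)
    (hA : MatchOn G {v | Avoid G s(a,b) s(x,y) a v ∧ v ≠ y})
    (hB : MatchOn G {v | Avoid G s(a,b) s(x,y) b v ∧ v ≠ x}) : False := by
  set f := s(a,b) with hf
  set g := s(x,y) with hg
  have hdisj : ∀ v, Avoid G f g a v → Avoid G f g b v → False := fun v h1 h2 =>
    hsep (h1.trans h2.symm)
  obtain ⟨NA, hNAE, hNAsub, hNAcov⟩ := hA
  obtain ⟨NB, hNBE, hNBsub, hNBcov⟩ := hB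
  -- the new perfect matching
  set M' : Set (Sym2 V) :=
    NA ∪ NB ∪ {g} ∪ {e ∈ M | ∀ v ∈ e, ¬Avoid G f g a v ∧ ¬Avoid G f g b v} with hM'
  have hxA : ∀ z ∈ s(x,y), ¬(Avoid G f g a z ∧ z ≠ y) := by
    rintro z hz ⟨h1, h2⟩
    rw [Sym2.mem_iff] at hz
    rcases hz with rfl | rfl
    · exact hdisj z h1 hbx
    · exact h2 rfl
  have hyB : ∀ z ∈ s(x,y), ¬(Avoid G f g b z ∧ z ≠ x) := by
    rintro z hz ⟨h1, h2⟩
    rw [Sym2.mem_iff] at hz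
    rcases hz with rfl | rfl
    · exact h2 rfl
    · exact hdisj z hay h1
  -- rest edges stay outside A ∪ B
  have hrest : ∀ e ∈ M, ∀ v ∈ e, (¬Avoid G f g a v ∧ ¬Avoid G f g b v) →
      ∀ w ∈ e, ¬Avoid G f g a w ∧ ¬Avoid G f g b w := by
    intro e heM v hve ⟨hva, hvb⟩ w hwe
    obtain ⟨v', rfl⟩ := Sym2.mem_iff_exists.mp hve
    have hvna : v ≠ a := fun h => hva (by rw [h])
    have hvnb : v ≠ b := fun h => hvb (by rw [h])
    have hef : s(v, v') ≠ f := by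
      intro h
      rw [hf, Sym2.eq_iff] at h
      rcases h with ⟨rfl, rfl⟩ | ⟨rfl, rfl⟩
      · exact hvna rfl
      · exact hvnb rfl
    have heg : s(v, v') ≠ g := fun h => hgM (h ▸ heM)
    have hadj : G.Adj v v' := (G.mem_edgeSet).mp (hM.1 heM)
    have hstep : Avoid G f g v v' := Avoid.step hadj hef heg
    rw [Sym2.mem_iff] at hwe
    rcases hwe with rfl | rfl
    · exact ⟨hva, hvb⟩
    · exact ⟨fun h => hva (h.trans hstep.symm), fun h => hvb (h.trans hstep.symm)⟩
  have hM'pm : IsPerfectMatching G M' := by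
    constructor
    · rintro e (((he | he) | he) | he)
      · exact hNAE he
      · exact hNBE he
      · rw [Set.mem_singleton_iff] at he; rw [he]; exact hgE
      · exact hM.1 he.1
    · intro v
      by_cases hva : Avoid G f g a v
      · by_cases hvy : v = y
        · subst hvy
          refine ⟨g, ⟨by simp [M'], by simp [hg]⟩, ?_⟩
          rintro e ⟨(((he | he) | he) | he), hve⟩
          · exact absurd (hNAsub e he _ hve) (by simp)
          · exact absurd (hNBsub e he _ hve) (fun h => hdisj _ hva h.1)
          · simpa using he
          · exact absurd hva (fun h => (he.2 _ hve).1 h)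
        · obtain ⟨e0, ⟨he0, hve0⟩, huniq⟩ := hNAcov v ⟨hva, hvy⟩
          refine ⟨e0, ⟨by simp [M', he0], hve0⟩, ?_⟩
          rintro e ⟨(((he | he) | he) | he), hve⟩
          · exact huniq e ⟨he, hve⟩
          · exact absurd (hNBsub e he _ hve) (fun h => hdisj v hva h.1)
          · rw [Set.mem_singleton_iff] at he; subst he
            exact absurd hve (fun h => hxA v h ⟨hva, hvy⟩)
          · exact absurd hva (fun h => (he.2 _ hve).1 h)
      · by_cases hvb : Avoid G f g b v
        · by_cases hvx : v = x
          · subst hvx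
            refine ⟨g, ⟨by simp [M'], by simp [hg]⟩, ?_⟩
            rintro e ⟨(((he | he) | he) | he), hve⟩
            · exact absurd (hNAsub e he _ hve) (fun h => hdisj v h.1 hvb)
            · exact absurd (hNBsub e he _ hve) (by simp)
            · simpa using he
            · exact absurd hvb (he.2 _ hve).2
          · obtain ⟨e0, ⟨he0, hve0⟩, huniq⟩ := hNBcov v ⟨hvb, hvx⟩
            refine ⟨e0, ⟨by simp [M', he0], hve0⟩, ?_⟩
            rintro e ⟨(((he | he) | he) | he), hve⟩
            · exact absurd (hNAsub e he _ hve) (fun h => hdisj v h.1 hvb)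
            · exact huniq e ⟨he, hve⟩
            · rw [Set.mem_singleton_iff] at he; subst he
              exact absurd hve (fun h => hyB v h ⟨hvb, hvx⟩)
            · exact absurd hvb (he.2 _ hve).2
        · obtain ⟨w, hw, -⟩ := pm_exists hM v
          have hall : ∀ z ∈ s(v,w), ¬Avoid G f g a z ∧ ¬Avoid G f g b z :=
            hrest _ hw v (Sym2.mem_mk_left _ _) ⟨hva, hvb⟩
          refine ⟨s(v,w), ⟨by simp only [M']; exact Or.inr ⟨hw, hall⟩, Sym2.mem_mk_left _ _⟩, ?_⟩
          rintro e ⟨(((he | he) | he) | he), hve⟩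
          · exact absurd (hNAsub e he _ hve) (fun h => hva h.1)
          · exact absurd (hNBsub e he _ hve) (fun h => hvb h.1)
          · rw [Set.mem_singleton_iff] at he; subst he
            rw [Sym2.mem_iff] at hve
            rcases hve with rfl | rfl
            · exact absurd hbx hvb
            · exact absurd hay hva
          · exact pm_unique hM he.1 hw hve (Sym2.mem_mk_left _ _)
  have : M' = M := hU M' hM'pm
  have : g ∈ M := this ▸ (by simp [M'] : g ∈ M')
  exact hgM this

end Case1

section Side

lemma edge_bound {W : Type*} [Fintype W] (H : SimpleGraph W) :
    H.edgeSet.ncard ≤ (Fintype.card W)^2 := by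
  classical
  have h1 : H.edgeSet.ncard ≤ Fintype.card (Sym2 W) :=
    (Set.ncard_le_ncard (Set.subset_univ _) (Set.finite_univ)).trans (by simp [Set.ncard_univ])
  refine h1.trans ?_
  rw [Sym2.card]
  set m := Fintype.card W
  have h2 : (m+1).choose 2 = (m+1) * m / 2 := by rw [Nat.choose_two_right]; simp
  have h3 : (m+1) * m ≤ 2 * m^2 := by nlinarith [Nat.le_self_pow (two_ne_zero) m]
  rw [h2]; omega

lemma meas_lt {c N n e : ℕ} (h1 : c < N) (h2 : N^3 ≤ n) (h3 : e ≤ c^2) :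
    c^3 + e < n := by
  have hN0 : 0 < N := lt_of_le_of_lt (Nat.zero_le c) h1
  have h4 : c^3 + e ≤ c^2 * (c+1) := by nlinarith
  have h5 : c^2 * (c+1) ≤ c^2 * N := Nat.mul_le_mul_left _ h1
  have h6 : c^2 < N^2 := Nat.pow_lt_pow_left h1 two_ne_zero
  have h7 : c^2 * N < N^2 * N := Nat.mul_lt_mul_of_lt_of_le h6 (le_refl N) hN0
  have h8 : N^2 * N = N^3 := by ring
  omega

variable {a b x y : V}

/-- The proper side reduction: when `B \ {x}` is not matchable and there is a vertex
outside `B ∪ {a}`. -/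
lemma side_proper [Fintype V] {n : ℕ}
    (IH : ∀ (W : Type u_1) [Fintype W] (H : SimpleGraph W) (N : Set (Sym2 W)),
      Fintype.card W ^ 3 + H.edgeSet.ncard < n → IsPerfectMatching H N →
      (∀ N', IsPerfectMatching H N' → N' = N) → H.edgeSet.Nonempty →
      ∃ e ∈ N, H.IsBridge e)
    (hn : Fintype.card V ^ 3 ≤ n)
    (hM : IsPerfectMatching G M) (hU : ∀ M', IsPerfectMatching G M' → M' = M)
    (hbr : ∀ e ∈ M, ¬G.IsBridge e)
    (hfM : s(a,b) ∈ M) (hgE : s(x,y) ∈ G.edgeSet) (hgM : s(x,y) ∉ M)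
    (hsep : ¬Avoid G s(a,b) s(x,y) a b)
    (hay : Avoid G s(a,b) s(x,y) a y) (hbx : Avoid G s(a,b) s(x,y) b x)
    (hxb : x ≠ b)
    (hout : ∃ z, ¬Avoid G s(a,b) s(x,y) b z ∧ z ≠ a)
    (hnmx : ¬MatchOn G {v | Avoid G s(a,b) s(x,y) b v ∧ v ≠ x}) : False := by
  classical
  set f := s(a,b) with hf
  set g := s(x,y) with hg
  have hdisj : ∀ v, Avoid G f g a v → Avoid G f g b v → False := fun v h1 h2 =>
    hsep (h1.trans h2.symm)
  have hba : ¬Avoid G f g b a := fun h => hdisj a (Avoid.refl a) h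
  have hax : a ≠ x := fun h => hba (h ▸ hbx).symm.symm
  have hab : a ≠ b := (G.mem_edgeSet.mp (hM.1 hfM)).ne
  -- the vertex set of the reduced graph
  set S : Set V := {v | Avoid G f g b v ∨ v = a} with hS
  haveI : DecidablePred (· ∈ S) := fun _ => Classical.propDecidable _
  have haS : a ∈ S := Or.inr rfl
  have hbS : b ∈ S := Or.inl (Avoid.refl b)
  have hxS : x ∈ S := Or.inl hbx
  set a' : ↥S := ⟨a, haS⟩
  set b' : ↥S := ⟨b, hbS⟩
  set x' : ↥S := ⟨x, hxS⟩
  -- the reduced graph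
  set GB : SimpleGraph ↥S :=
    { Adj := fun u v => (G.Adj u v ∨ s((u:V),(v:V)) = s(a,x)) ∧ u ≠ v
      symm := by
        constructor
        rintro u v ⟨h | h, hne⟩
        · exact ⟨Or.inl h.symm, hne.symm⟩
        · exact ⟨Or.inr (Sym2.eq_swap.trans h), hne.symm⟩
      loopless := ⟨fun u h => h.2 rfl⟩ } with hGB
  have hGBadj : ∀ p q : ↥S, GB.Adj p q ↔ ((G.Adj p q ∨ s((p:V),(q:V)) = s(a,x)) ∧ p ≠ q) :=
    fun p q => Iff.rfl
  -- closure of S under the matching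
  have hcl : ∀ v : V, v ∈ S → ∀ w, s(v, w) ∈ M → w ∈ S := by
    rintro v (hv | rfl) w hw
    · rcases eq_or_ne s(v,w) f with hef | hef
      · rw [hf, Sym2.eq_iff] at hef
        rcases hef with ⟨rfl, rfl⟩ | ⟨rfl, rfl⟩
        · exact absurd hv hba
        · exact Or.inr rfl
      · have heg : s(v,w) ≠ g := fun h => hgM (h ▸ hw)
        exact Or.inl (hv.trans (Avoid.step (G.mem_edgeSet.mp (hM.1 hw)) hef heg))
    · have : w = b := pm_partner_unique hM hw hfM
      exact this ▸ Or.inl (Avoid.refl b)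
  -- lifted matching
  set MS : Set (Sym2 ↥S) := {e : Sym2 ↥S | e.map Subtype.val ∈ M} with hMS
  have hGBpm : IsPerfectMatching GB MS := by
    apply pm_restrict hM hcl
    · exact fun u v h => ⟨Or.inl h, fun he => h.ne (congrArg Subtype.val he)⟩
    · intro e he
      induction e using Sym2.ind with
      | _ p q =>
        rw [SimpleGraph.mem_edgeSet]
        rw [Sym2.map_pair_eq] at he
        have hadj : G.Adj p q := G.mem_edgeSet.mp (hM.1 he)
        exact ⟨Or.inl hadj, fun h => hadj.ne (congrArg Subtype.val h)⟩
  -- any perfect matching of GB equals MS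
  have hGBuniq : ∀ N, IsPerfectMatching GB N → N = MS := by
    intro N hN
    -- the edge of N at a'
    obtain ⟨e0, ⟨he0N, hae0⟩, he0uniq⟩ := hN.2 a'
    obtain ⟨w', he0⟩ := Sym2.mem_iff_exists.mp hae0
    subst he0
    have hadj0 : GB.Adj a' w' := GB.mem_edgeSet.mp (hN.1 he0N)
    -- only one non-genuine edge shape
    have hgenuine : ∀ e ∈ N, a' ∉ e → (e.map Subtype.val) ∈ G.edgeSet := by
      intro e heN hae
      revert heN hae
      induction e using Sym2.ind with
      | _ p q =>
        intro heN hae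
        have : GB.Adj p q := GB.mem_edgeSet.mp (hN.1 heN)
        rcases this.1 with h | h
        · rwa [Sym2.map_pair_eq, SimpleGraph.mem_edgeSet]
        · rw [Sym2.eq_iff] at h
          exfalso
          apply hae
          rcases h with ⟨hp, -⟩ | ⟨-, hq⟩
          · exact (Subtype.ext hp : p = a') ▸ Sym2.mem_mk_left p q
          · exact (Subtype.ext hq : q = a') ▸ Sym2.mem_mk_right p q
    have hwb_or : (w' : V) = b ∨ (w' : V) = x := by
      rcases hadj0.1 with h | h
      · rcases (w'.2 : Avoid G f g b (w' : V) ∨ (w' : V) = a) with hwB | hwa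
        · rcases eq_or_ne s(a, (w' : V)) f with hef | hef
          · rw [hf, Sym2.eq_iff] at hef
            rcases hef with ⟨-, h2⟩ | ⟨h1, -⟩
            · exact Or.inl h2
            · exact absurd h1 hab
          · rcases eq_or_ne s(a, (w' : V)) g with heg | heg
            · rw [hg, Sym2.eq_iff] at heg
              rcases heg with ⟨h1, h2⟩ | ⟨h1, h2⟩
              · exact absurd h1 hax
              · exact Or.inr h2
            · exact absurd hwB (fun hB => hdisj _ (Avoid.step h hef heg) hB)
        · exact absurd (congrArg Subtype.val (Subtype.ext hwa : w' = a')) h.ne'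
      · rw [Sym2.eq_iff] at h
        rcases h with ⟨-, h2⟩ | ⟨h1, -⟩
        · exact Or.inr h2
        · exact absurd h1 hax
    rcases hwb_or with hwb | hwx
    · -- a' is matched to b' : genuine, glue
      have hall : ∀ e ∈ N, (e.map Subtype.val) ∈ G.edgeSet := by
        intro e heN
        by_cases hae : a' ∈ e
        · rw [he0uniq e ⟨heN, hae⟩, Sym2.map_pair_eq]
          have : (w' : V) = b := hwb
          rw [this]
          exact hM.1 hfM
        · exact hgenuine e heN hae
      have hglue := pm_glue hM hcl N hall hN.2
      have hMM := hU _ hglue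
      refine pm_lift_unique hM N (fun e he => ?_) hN.2
      have : (e.map Subtype.val) ∈ (Sym2.map Subtype.val) '' N ∪ {e ∈ M | ∀ v ∈ e, v ∉ S} :=
        Or.inl ⟨e, he, rfl⟩
      rwa [hMM] at this
    · -- a' is matched to x' : B \ {x} is matchable, contradiction
      exfalso
      apply hnmx
      have hx'w' : w' = x' := Subtype.ext hwx
      subst hx'w'
      refine ⟨(Sym2.map Subtype.val) '' (N \ {s(a', x')}), ?_, ?_, ?_⟩
      · rintro e ⟨e1, ⟨he1N, he1ne⟩, rfl⟩
        refine hgenuine e1 he1N (fun hae1 => he1ne ?_)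
        rw [Set.mem_singleton_iff]
        exact he0uniq e1 ⟨he1N, hae1⟩
      · rintro e ⟨e1, ⟨he1N, he1ne⟩, rfl⟩ v hv
        obtain ⟨v1, hv1e, rfl⟩ := mem_of_mem_map_val e1 v hv
        have hv1a : v1 ≠ a' := by
          rintro rfl
          exact he1ne (by rw [Set.mem_singleton_iff]; exact he0uniq e1 ⟨he1N, hv1e⟩)
        have hv1x : v1 ≠ x' := by
          rintro rfl
          obtain ⟨e2, -, he2uniq⟩ := hN.2 x'
          have h1 : e1 = e2 := he2uniq e1 ⟨he1N, hv1e⟩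
          have h2 : s(a', x') = e2 := he2uniq _ ⟨he0N, Sym2.mem_mk_right _ _⟩
          exact he1ne (by rw [Set.mem_singleton_iff, h1, ← h2])
        constructor
        · rcases (v1.2 : Avoid G f g b (v1 : V) ∨ (v1 : V) = a) with h | h
          · exact h
          · exact absurd (Subtype.ext h : v1 = a') hv1a
        · exact fun h => hv1x (Subtype.ext h)
      · rintro v ⟨hvB, hvx⟩
        have hvS : v ∈ S := Or.inl hvB
        obtain ⟨e1, ⟨he1N, hve1⟩, he1uniq⟩ := hN.2 ⟨v, hvS⟩
        have he1ne : e1 ∉ ({s(a', x')} : Set (Sym2 ↥S)) := by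
          rw [Set.mem_singleton_iff]
          rintro rfl
          rw [Sym2.mem_iff] at hve1
          rcases hve1 with h | h
          · have hv' : v = a := congrArg Subtype.val h
            exact hba (by rw [← hv']; exact hvB)
          · exact hvx (congrArg Subtype.val h)
        refine ⟨e1.map Subtype.val, ⟨⟨e1, ⟨he1N, he1ne⟩, rfl⟩, mem_map_val e1 _ hve1⟩, ?_⟩
        rintro e ⟨⟨e2, ⟨he2N, -⟩, rfl⟩, hve2⟩
        obtain ⟨v2, hv2e, hv2val⟩ := mem_of_mem_map_val e2 v hve2
        have : v2 = ⟨v, hvS⟩ := Subtype.ext hv2val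
        subst this
        rw [he1uniq e2 ⟨he2N, hv2e⟩]
  -- GB has an edge
  have hfMS : (s(a', b') : Sym2 ↥S) ∈ MS := by
    rw [hMS]; simp only [Set.mem_setOf_eq, Sym2.map_pair_eq]; exact hfM
  have hGBne : GB.edgeSet.Nonempty := ⟨s(a', b'), hGBpm.1 hfMS⟩
  -- measure decreases
  obtain ⟨z, hzB, hza⟩ := hout
  have hzS : z ∉ S := by rintro (h | h); exacts [hzB h, hza h]
  have hcard : Fintype.card ↥S < Fintype.card V := Fintype.card_subtype_lt (x := z) hzS
  have hmeas : Fintype.card ↥S ^ 3 + GB.edgeSet.ncard < n :=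
    meas_lt hcard hn (edge_bound GB)
  obtain ⟨h', hh'MS, hh'br⟩ := IH ↥S GB MS hmeas hGBpm hGBuniq hGBne
  revert hh'MS hh'br
  induction h' using Sym2.ind with
  | _ c' d' =>
  intro hh'MS hh'br
  obtain ⟨c, hcS⟩ := c'
  obtain ⟨d, hdS⟩ := d'
  have hhM : s(c, d) ∈ M := by rw [hMS] at hh'MS; simpa [Sym2.map_pair_eq] using hh'MS
  have hcd : G.Adj c d := G.mem_edgeSet.mp (hM.1 hhM)
  have hax_ne : s(a, x) ≠ s(c, d) := by
    intro h
    rw [← h] at hhM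
    exact hxb (pm_partner_unique hM hhM hfM)
  -- the deleted version of GB
  set Hdel := GB \ SimpleGraph.fromEdgeSet {(s(⟨c, hcS⟩, ⟨d, hdS⟩) : Sym2 ↥S)} with hHdel
  have hstep' : ∀ (p q : ↥S), GB.Adj p q → s((p:V),(q:V)) ≠ s(c,d) → Hdel.Adj p q := by
    intro p q hpq hne
    rw [hHdel, SimpleGraph.sdiff_adj]
    refine ⟨hpq, ?_⟩
    rw [SimpleGraph.fromEdgeSet_adj]
    rintro ⟨he, -⟩
    rw [Set.mem_singleton_iff] at he
    apply hne
    have := congrArg (Sym2.map (Subtype.val : ↥S → V)) he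
    simpa [Sym2.map_pair_eq] using this
  have e_ax : Hdel.Adj a' x' :=
    hstep' a' x' ⟨Or.inr rfl, fun h => hax (congrArg Subtype.val h)⟩ hax_ne
  -- the master walk transfer
  have master : ∀ (u v : V) (p : G.Walk u v), s(c,d) ∉ p.edges →
      ∀ (hv : Avoid G f g b v),
      (∀ (hu : Avoid G f g b u),
        Hdel.Reachable ⟨u, Or.inl hu⟩ ⟨v, Or.inl hv⟩) ∧
      (Avoid G f g a u → Hdel.Reachable x' ⟨v, Or.inl hv⟩) := by
    intro u v p
    induction p with
    | nil =>
      intro hpe hv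
      exact ⟨fun hu => Reachable.refl _, fun hu => absurd hv (fun h => hdisj _ hu h)⟩
    | @cons u w v hadj q ih =>
      intro hpe hv
      rw [SimpleGraph.Walk.edges_cons, List.mem_cons] at hpe
      push_neg at hpe
      obtain ⟨hne_head, hpe'⟩ := hpe
      have ihq := ih hpe' hv
      constructor
      · intro hu
        by_cases hwB : Avoid G f g b w
        · have hGadj : GB.Adj ⟨u, Or.inl hu⟩ ⟨w, Or.inl hwB⟩ :=
            ⟨Or.inl hadj, fun h => hadj.ne (congrArg Subtype.val h)⟩
          exact ((hstep' _ _ hGadj (fun h => hne_head h.symm)).reachable).trans (ihq.1 hwB)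
        · have hcross : (b = u ∧ a = w) ∨ (x = u ∧ y = w) := by
            rcases eq_or_ne s(u,w) f with hef | hef
            · rw [hf, Sym2.eq_iff] at hef
              rcases hef with ⟨h1, h2⟩ | ⟨h1, h2⟩
              · exact absurd (by rw [h2] : Avoid G f g b w) hwB
              · exact Or.inl ⟨h1.symm, h2.symm⟩
            · rcases eq_or_ne s(u,w) g with heg | heg
              · rw [hg, Sym2.eq_iff] at heg
                rcases heg with ⟨h1, h2⟩ | ⟨h1, h2⟩
                · exact Or.inr ⟨h1.symm, h2.symm⟩
                · exact absurd (by rw [h2]; exact hbx : Avoid G f g b w) hwB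
              · exact absurd (hu.trans (Avoid.step hadj hef heg)) hwB
          rcases hcross with ⟨rfl, rfl⟩ | ⟨rfl, rfl⟩
          · have e1 : Hdel.Adj b' a' :=
              hstep' b' a' ⟨Or.inl hadj, fun h => hab (congrArg Subtype.val h).symm⟩
                (fun h => hne_head h.symm)
            exact (e1.reachable.trans e_ax.reachable).trans (ihq.2 (Avoid.refl a))
          · exact ihq.2 hay
      · intro hu
        by_cases hwA : Avoid G f g a w
        · exact ihq.2 hwA
        · have hcross : (a = u ∧ b = w) ∨ (y = u ∧ x = w) := by
            rcases eq_or_ne s(u,w) f with hef | hef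
            · rw [hf, Sym2.eq_iff] at hef
              rcases hef with ⟨h1, h2⟩ | ⟨h1, h2⟩
              · exact Or.inl ⟨h1.symm, h2.symm⟩
              · exact absurd (by rw [← h1]; exact hu : Avoid G f g a b) hsep
            · rcases eq_or_ne s(u,w) g with heg | heg
              · rw [hg, Sym2.eq_iff] at heg
                rcases heg with ⟨h1, h2⟩ | ⟨h1, h2⟩
                · exact absurd hbx (fun hb => hdisj x (by rw [← h1]; exact hu) hb)
                · exact Or.inr ⟨h1.symm, h2.symm⟩
              · exact absurd (hu.trans (Avoid.step hadj hef heg)) hwA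
          rcases hcross with ⟨rfl, rfl⟩ | ⟨rfl, rfl⟩
          · have e1 : Hdel.Adj a' b' :=
              hstep' a' b' ⟨Or.inl hadj, fun h => hab (congrArg Subtype.val h)⟩
                (fun h => hne_head h.symm)
            exact (e_ax.symm.reachable.trans e1.reachable).trans (ihq.1 (Avoid.refl b))
          · exact ihq.1 hbx
  -- apply everything
  have hnbr := hbr _ hhM
  rw [SimpleGraph.isBridge_iff] at hnbr
  push_neg at hnbr
  obtain ⟨p0, hp0⟩ := (SimpleGraph.reachable_delete_edges_iff_exists_walk).mp hnbr
  have hbridge := hh'br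
  rw [SimpleGraph.isBridge_iff] at hbridge
  have hnoreach := hbridge
  apply hnoreach
  rw [SimpleGraph.deleteEdges, ← hHdel]
  rcases hcS with hcB | hca
  · rcases hdS with hdB | hda
    · exact (master c d p0 hp0 hdB).1 hcB
    · -- d = a, so c = b
      have hcb : c = b := by
        have h1 : s(a, c) ∈ M := by rw [← hda, Sym2.eq_swap]; exact hhM
        exact pm_partner_unique hM h1 hfM
      have hq := (master a b (p0.reverse.copy hda hcb)
        (by rw [SimpleGraph.Walk.edges_copy, SimpleGraph.Walk.edges_reverse, List.mem_reverse]
            exact hp0)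
        (Avoid.refl b)).2 (Avoid.refl a)
      have hc' : (⟨c, Or.inl hcB⟩ : ↥S) = ⟨b, Or.inl (Avoid.refl b)⟩ := Subtype.ext hcb
      have hd' : (⟨d, Or.inr hda⟩ : ↥S) = a' := Subtype.ext hda
      rw [hc', hd']
      exact (e_ax.reachable.trans hq).symm
  · -- c = a, so d = b
    have hdb : d = b := by
      have h1 : s(a, d) ∈ M := by rw [← hca]; exact hhM
      exact pm_partner_unique hM h1 hfM
    have hq := (master a b (p0.copy hca hdb)
      (by rw [SimpleGraph.Walk.edges_copy]; exact hp0)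
      (Avoid.refl b)).2 (Avoid.refl a)
    have hc' : (⟨c, Or.inr hca⟩ : ↥S) = a' := Subtype.ext hca
    have hd'2 : d ∈ S := Or.inl (by rw [hdb])
    have hd' : (⟨d, hd'2⟩ : ↥S) = ⟨b, Or.inl (Avoid.refl b)⟩ := Subtype.ext hdb
    rw [hc', hd']
    exact e_ax.reachable.trans hq

lemma side_degenerate [Fintype V] {n : ℕ}
    (IH : ∀ (W : Type u_1) [Fintype W] (H : SimpleGraph W) (N : Set (Sym2 W)),
      Fintype.card W ^ 3 + H.edgeSet.ncard < n → IsPerfectMatching H N →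
      (∀ N', IsPerfectMatching H N' → N' = N) → H.edgeSet.Nonempty →
      ∃ e ∈ N, H.IsBridge e)
    (hn : Fintype.card V ^ 3 ≤ n)
    (hM : IsPerfectMatching G M) (hU : ∀ M', IsPerfectMatching G M' → M' = M)
    (hbr : ∀ e ∈ M, ¬G.IsBridge e)
    (hfM : s(a,b) ∈ M) (hgE : s(x,y) ∈ G.edgeSet) (hgM : s(x,y) ∉ M)
    (hsep : ¬Avoid G s(a,b) s(x,y) a b)
    (hay : Avoid G s(a,b) s(x,y) a y) (hbx : Avoid G s(a,b) s(x,y) b x)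
    (hxb : x ≠ b)
    (hall : ∀ z, Avoid G s(a,b) s(x,y) b z ∨ z = a) : False := by
  classical
  set f := s(a,b) with hf
  set g := s(x,y) with hg
  have hdisj : ∀ v, Avoid G f g a v → Avoid G f g b v → False := fun v h1 h2 =>
    hsep (h1.trans h2.symm)
  have hba : ¬Avoid G f g b a := fun h => hdisj a (Avoid.refl a) h
  have hax : a ≠ x := fun h => hba (h ▸ hbx).symm.symm
  have hab : a ≠ b := (G.mem_edgeSet.mp (hM.1 hfM)).ne
  have hgadj : G.Adj x y := G.mem_edgeSet.mp hgE
  -- y must be a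
  have hya : y = a := by
    rcases hall y with h | h
    · exact absurd hay (fun h' => hdisj y h' h)
    · exact h
  -- all neighbours of a are b or x
  have hNa : ∀ z, G.Adj a z → z = b ∨ z = x := by
    intro z hz
    rcases eq_or_ne s(a,z) f with hef | hef
    · rw [hf, Sym2.eq_iff] at hef
      rcases hef with ⟨-, h2⟩ | ⟨h1, -⟩
      · exact Or.inl h2
      · exact absurd h1 hab
    · rcases eq_or_ne s(a,z) g with heg | heg
      · rw [hg, Sym2.eq_iff] at heg
        rcases heg with ⟨h1, -⟩ | ⟨-, h2⟩
        · exact absurd h1 hax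
        · exact Or.inr h2
      · exfalso
        have hstep := Avoid.step hz hef heg
        rcases hall z with h | h
        · exact hdisj z hstep h
        · rw [h] at hz
          exact G.irrefl hz
  -- the partner of x
  obtain ⟨x2, hx2M, hxx2⟩ := pm_exists hM x
  have hx2a : x2 ≠ a := by
    intro h
    rw [h] at hx2M
    have : s(a,x) ∈ M := by rwa [Sym2.eq_swap] at hx2M
    exact hxb (pm_partner_unique hM this hfM)
  have hx2b : x2 ≠ b := by
    intro h
    rw [h] at hx2M
    have h1 : s(b,x) ∈ M := by rwa [Sym2.eq_swap] at hx2M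
    have h2 : s(b,a) ∈ M := by rw [Sym2.eq_swap]; exact hfM
    exact hax (pm_partner_unique hM h2 h1)
  have hx2x : x2 ≠ x := fun h => G.irrefl (h ▸ hxx2)
  have hgax : s(a, x) ∈ G.edgeSet := by
    rw [SimpleGraph.mem_edgeSet]
    have : G.Adj x a := hya ▸ hgadj
    exact this.symm
  by_cases hD1 : G.Adj b x2
  · -- alternating 4-cycle a-b-x2-x-a gives a second perfect matching
    set M'' : Set (Sym2 V) := (M \ {f, s(x,x2)}) ∪ {s(a,x), s(b,x2)} with hM''
    have hM''pm : IsPerfectMatching G M'' := by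
      constructor
      · rintro e (⟨he, -⟩ | he)
        · exact hM.1 he
        · simp only [Set.mem_insert_iff, Set.mem_singleton_iff] at he
          rcases he with rfl | rfl
          · exact hgax
          · exact (G.mem_edgeSet).mpr hD1
      · intro v
        by_cases hva : v = a
        · rw [hva]
          refine ⟨s(a,x), ⟨Or.inr (Or.inl rfl), Sym2.mem_mk_left _ _⟩, ?_⟩
          rintro e ⟨(⟨heM, hne⟩ | (rfl | rfl)), hve⟩
          · exfalso
            have he : e = f := pm_unique hM heM hfM hve (Sym2.mem_mk_left a b)
            simp only [Set.mem_insert_iff, Set.mem_singleton_iff, not_or] at hne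
            exact hne.1 he
          · rfl
          · exfalso
            rw [Sym2.mem_iff] at hve
            rcases hve with h | h
            · exact hab h
            · exact hx2a h.symm
        · by_cases hvb : v = b
          · rw [hvb]
            refine ⟨s(b,x2), ⟨Or.inr (Or.inr rfl), Sym2.mem_mk_left _ _⟩, ?_⟩
            rintro e ⟨(⟨heM, hne⟩ | (rfl | rfl)), hve⟩
            · exfalso
              have h2 : s(b,a) ∈ M := by rw [Sym2.eq_swap]; exact hfM
              have he : e = s(b,a) := pm_unique hM heM h2 hve (Sym2.mem_mk_left b a)
              simp only [Set.mem_insert_iff, Set.mem_singleton_iff, not_or] at hne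
              exact hne.1 (by rw [he, hf, Sym2.eq_swap])
            · exfalso
              rw [Sym2.mem_iff] at hve
              rcases hve with h | h
              · exact hab h.symm
              · exact hxb h.symm
            · rfl
          · by_cases hvx : v = x
            · rw [hvx]
              refine ⟨s(a,x), ⟨Or.inr (Or.inl rfl), Sym2.mem_mk_right _ _⟩, ?_⟩
              rintro e ⟨(⟨heM, hne⟩ | (rfl | rfl)), hve⟩
              · exfalso
                have he : e = s(x,x2) := pm_unique hM heM hx2M hve (Sym2.mem_mk_left x x2)
                simp only [Set.mem_insert_iff, Set.mem_singleton_iff, not_or] at hne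
                exact hne.2 he
              · rfl
              · exfalso
                rw [Sym2.mem_iff] at hve
                rcases hve with h | h
                · exact hxb h
                · exact hx2x h.symm
            · by_cases hvx2 : v = x2
              · rw [hvx2]
                refine ⟨s(b,x2), ⟨Or.inr (Or.inr rfl), Sym2.mem_mk_right _ _⟩, ?_⟩
                rintro e ⟨(⟨heM, hne⟩ | (rfl | rfl)), hve⟩
                · exfalso
                  have h2 : s(x2,x) ∈ M := by rw [Sym2.eq_swap]; exact hx2M
                  have he : e = s(x2,x) := pm_unique hM heM h2 hve (Sym2.mem_mk_left x2 x)
                  simp only [Set.mem_insert_iff, Set.mem_singleton_iff, not_or] at hne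
                  exact hne.2 (by rw [he, Sym2.eq_swap])
                · exfalso
                  rw [Sym2.mem_iff] at hve
                  rcases hve with h | h
                  · exact hx2a h
                  · exact hx2x h
                · rfl
              · obtain ⟨w, hwM, -⟩ := pm_exists hM v
                refine ⟨s(v,w), ⟨Or.inl ⟨hwM, ?_⟩, Sym2.mem_mk_left _ _⟩, ?_⟩
                · simp only [Set.mem_insert_iff, Set.mem_singleton_iff, not_or]
                  constructor
                  · rw [hf]
                    intro h
                    rw [Sym2.eq_iff] at h
                    rcases h with ⟨h1, -⟩ | ⟨h1, -⟩
                    · exact hva h1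
                    · exact hvb h1
                  · intro h
                    rw [Sym2.eq_iff] at h
                    rcases h with ⟨h1, -⟩ | ⟨h1, -⟩
                    · exact hvx h1
                    · exact hvx2 h1
                · rintro e ⟨(⟨heM, -⟩ | (rfl | rfl)), hve⟩
                  · exact pm_unique hM heM hwM hve (Sym2.mem_mk_left _ _)
                  · exfalso
                    rw [Sym2.mem_iff] at hve
                    rcases hve with h | h
                    · exact hva h
                    · exact hvx h
                  · exfalso
                    rw [Sym2.mem_iff] at hve
                    rcases hve with h | h
                    · exact hvb h
                    · exact hvx2 h
    have hMM := hU _ hM''pm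
    have : s(a,x) ∈ M := by
      rw [← hMM]
      exact Or.inr (Or.inl rfl)
    exact hxb (pm_partner_unique hM this hfM)
  · -- D2 : the patched reduced graph on V \ {a,b}
    set S2 : Set V := {v | v ≠ a ∧ v ≠ b} with hS2
    haveI : DecidablePred (· ∈ S2) := fun _ => Classical.propDecidable _
    have hxS2 : x ∈ S2 := ⟨hax.symm, hxb⟩
    have hx2S2 : x2 ∈ S2 := ⟨hx2a, hx2b⟩
    set x'' : ↥S2 := ⟨x, hxS2⟩ with hx''
    set K : SimpleGraph ↥S2 :=
      { Adj := fun u v => (G.Adj u v ∨ ((u:V) = x ∧ G.Adj b v) ∨ ((v:V) = x ∧ G.Adj b u)) ∧ u ≠ v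
        symm := by
          constructor
          rintro u v ⟨h | h | h, hne⟩
          · exact ⟨Or.inl h.symm, hne.symm⟩
          · exact ⟨Or.inr (Or.inr h), hne.symm⟩
          · exact ⟨Or.inr (Or.inl h), hne.symm⟩
        loopless := ⟨fun u h => h.2 rfl⟩ } with hK
    have hcl2 : ∀ v : V, v ∈ S2 → ∀ w, s(v, w) ∈ M → w ∈ S2 := by
      rintro v ⟨hva, hvb⟩ w hw
      constructor
      · intro h
        rw [h] at hw
        have : s(a,v) ∈ M := by rw [Sym2.eq_swap]; exact hw
        exact hvb (pm_partner_unique hM this hfM)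
      · intro h
        rw [h] at hw
        have h1 : s(b,v) ∈ M := by rw [Sym2.eq_swap]; exact hw
        have h2 : s(b,a) ∈ M := by rw [Sym2.eq_swap]; exact hfM
        exact hva (pm_partner_unique hM h1 h2)
    set MS2 : Set (Sym2 ↥S2) := {e : Sym2 ↥S2 | e.map Subtype.val ∈ M} with hMS2
    have hKpm : IsPerfectMatching K MS2 := by
      apply pm_restrict hM hcl2
      · exact fun u v h => ⟨Or.inl h, fun he => h.ne (congrArg Subtype.val he)⟩
      · intro e he
        induction e using Sym2.ind with
        | _ p q =>
          rw [SimpleGraph.mem_edgeSet]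
          rw [Sym2.map_pair_eq] at he
          have hadj : G.Adj p q := G.mem_edgeSet.mp (hM.1 he)
          exact ⟨Or.inl hadj, fun h => hadj.ne (congrArg Subtype.val h)⟩
    have hKuniq : ∀ N, IsPerfectMatching K N → N = MS2 := by
      intro N hN
      by_cases hbad : ∀ e ∈ N, e.map Subtype.val ∈ G.edgeSet
      · have hglue := pm_glue hM hcl2 N hbad hN.2
        have hMM := hU _ hglue
        refine pm_lift_unique hM N (fun e he => ?_) hN.2
        have hmem : (e.map Subtype.val) ∈
            (Sym2.map Subtype.val) '' N ∪ {e ∈ M | ∀ v ∈ e, v ∉ S2} := Or.inl ⟨e, he, rfl⟩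
        rwa [hMM] at hmem
      · exfalso
        push_neg at hbad
        obtain ⟨e1, he1N, he1bad⟩ := hbad
        have key : ∀ (P W : ↥S2), K.Adj P W → (P:V) = x → G.Adj b W → s(P,W) ∈ N → False := by
          intro P W hadj hPx hbW hPN
          have hWx : (W:V) ≠ x := by
            intro h
            exact hadj.ne (Subtype.ext (hPx.trans h.symm))
          have hWa : (W:V) ≠ a := W.2.1
          have hWb : (W:V) ≠ b := W.2.2
          -- every other edge of N is genuine
          have hgen : ∀ e ∈ N, e ≠ s(P,W) → e.map Subtype.val ∈ G.edgeSet := by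
            intro e heN hene
            revert heN hene
            induction e using Sym2.ind with
            | _ p q =>
              intro heN hene
              have hadj2 : K.Adj p q := K.mem_edgeSet.mp (hN.1 heN)
              rcases hadj2.1 with h | ⟨h1, -⟩ | ⟨h1, -⟩
              · rw [Sym2.map_pair_eq]; exact (G.mem_edgeSet).mpr h
              · exfalso
                have hpP : p = P := Subtype.ext (h1.trans hPx.symm)
                obtain ⟨eP, -, hePuniq⟩ := hN.2 P
                have := (hePuniq _ ⟨heN, hpP ▸ Sym2.mem_mk_left p q⟩).trans
                  (hePuniq _ ⟨hPN, Sym2.mem_mk_left P W⟩).symm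
                exact hene this
              · exfalso
                have hqP : q = P := Subtype.ext (h1.trans hPx.symm)
                obtain ⟨eP, -, hePuniq⟩ := hN.2 P
                have := (hePuniq _ ⟨heN, hqP ▸ Sym2.mem_mk_right p q⟩).trans
                  (hePuniq _ ⟨hPN, Sym2.mem_mk_left P W⟩).symm
                exact hene this
          -- no other edge of N contains P or W
          have hnomem : ∀ e ∈ N, e ≠ s(P,W) → ∀ v : ↥S2, v ∈ e → v ≠ P ∧ v ≠ W := by
            intro e heN hene v hv
            constructor
            · intro hvP
              obtain ⟨eP, -, hePuniq⟩ := hN.2 v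
              exact hene ((hePuniq _ ⟨heN, hv⟩).trans
                (hePuniq _ ⟨hPN, by rw [hvP]; exact Sym2.mem_mk_left P W⟩).symm)
            · intro hvW
              obtain ⟨eP, -, hePuniq⟩ := hN.2 v
              exact hene ((hePuniq _ ⟨heN, hv⟩).trans
                (hePuniq _ ⟨hPN, by rw [hvW]; exact Sym2.mem_mk_right P W⟩).symm)
          -- the second perfect matching of G
          set M3 : Set (Sym2 V) :=
            (Sym2.map Subtype.val '' (N \ {s(P,W)})) ∪ {s(a,x), s(b,(W:V))} with hM3
          have hM3pm : IsPerfectMatching G M3 := by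
            constructor
            · rintro e (⟨e2, ⟨he2N, he2ne⟩, rfl⟩ | he)
              · exact hgen e2 he2N (fun h => he2ne (by rw [h]; rfl))
              · simp only [Set.mem_insert_iff, Set.mem_singleton_iff] at he
                rcases he with rfl | rfl
                · exact hgax
                · exact (G.mem_edgeSet).mpr hbW
            · intro v
              by_cases hva2 : v = a
              · rw [hva2]
                refine ⟨s(a,x), ⟨Or.inr (by simp), Sym2.mem_mk_left _ _⟩, ?_⟩
                rintro e ⟨(⟨e2, ⟨he2N, -⟩, rfl⟩ | he), hve⟩
                · exfalso
                  obtain ⟨v2, -, hv2⟩ := mem_of_mem_map_val e2 a hve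
                  exact v2.2.1 hv2
                · simp only [Set.mem_insert_iff, Set.mem_singleton_iff] at he
                  rcases he with rfl | rfl
                  · rfl
                  · exfalso
                    rw [Sym2.mem_iff] at hve
                    rcases hve with h | h
                    · exact hab h
                    · exact hWa h.symm
              · by_cases hvb2 : v = b
                · rw [hvb2]
                  refine ⟨s(b,(W:V)), ⟨Or.inr (by simp), Sym2.mem_mk_left _ _⟩, ?_⟩
                  rintro e ⟨(⟨e2, ⟨he2N, -⟩, rfl⟩ | he), hve⟩
                  · exfalso
                    obtain ⟨v2, -, hv2⟩ := mem_of_mem_map_val e2 b hve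
                    exact v2.2.2 hv2
                  · simp only [Set.mem_insert_iff, Set.mem_singleton_iff] at he
                    rcases he with rfl | rfl
                    · exfalso
                      rw [Sym2.mem_iff] at hve
                      rcases hve with h | h
                      · exact hab h.symm
                      · exact hxb h.symm
                    · rfl
                · by_cases hvx2' : v = x
                  · rw [hvx2']
                    refine ⟨s(a,x), ⟨Or.inr (by simp), Sym2.mem_mk_right _ _⟩, ?_⟩
                    rintro e ⟨(⟨e2, ⟨he2N, he2ne⟩, rfl⟩ | he), hve⟩
                    · exfalso
                      obtain ⟨v2, hv2e, hv2⟩ := mem_of_mem_map_val e2 x hve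
                      have : v2 = P := Subtype.ext (hv2.trans hPx.symm)
                      exact (hnomem e2 he2N (fun h => he2ne (by rw [h]; rfl)) v2 hv2e).1 this
                    · simp only [Set.mem_insert_iff, Set.mem_singleton_iff] at he
                      rcases he with rfl | rfl
                      · rfl
                      · exfalso
                        rw [Sym2.mem_iff] at hve
                        rcases hve with h | h
                        · exact hxb h
                        · exact hWx h.symm
                  · by_cases hvw : v = (W:V)
                    · rw [hvw]
                      refine ⟨s(b,(W:V)), ⟨Or.inr (by simp), Sym2.mem_mk_right _ _⟩, ?_⟩
                      rintro e ⟨(⟨e2, ⟨he2N, he2ne⟩, rfl⟩ | he), hve⟩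
                      · exfalso
                        obtain ⟨v2, hv2e, hv2⟩ := mem_of_mem_map_val e2 (W:V) hve
                        have : v2 = W := Subtype.ext hv2
                        exact (hnomem e2 he2N (fun h => he2ne (by rw [h]; rfl)) v2 hv2e).2 this
                      · simp only [Set.mem_insert_iff, Set.mem_singleton_iff] at he
                        rcases he with rfl | rfl
                        · exfalso
                          rw [Sym2.mem_iff] at hve
                          rcases hve with h | h
                          · exact hWa h
                          · exact hWx h
                        · rfl
                    · -- v in S2, not x, not W
                      have hvS2 : v ∈ S2 := ⟨hva2, hvb2⟩
                      obtain ⟨e2, ⟨he2N, hve2⟩, he2uniq⟩ := hN.2 ⟨v, hvS2⟩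
                      have he2ne : e2 ≠ s(P,W) := by
                        intro h
                        rw [h, Sym2.mem_iff] at hve2
                        rcases hve2 with h' | h'
                        · exact hvx2' ((congrArg Subtype.val h').trans hPx)
                        · exact hvw (congrArg Subtype.val h')
                      refine ⟨e2.map Subtype.val,
                        ⟨Or.inl ⟨e2, ⟨he2N, fun h => he2ne (by simpa using h)⟩, rfl⟩,
                          mem_map_val e2 _ hve2⟩, ?_⟩
                      rintro e ⟨(⟨e3, ⟨he3N, -⟩, rfl⟩ | he), hve⟩
                      · obtain ⟨v3, hv3e, hv3⟩ := mem_of_mem_map_val e3 v hve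
                        have : v3 = ⟨v, hvS2⟩ := Subtype.ext hv3
                        rw [he2uniq e3 ⟨he3N, this ▸ hv3e⟩]
                      · exfalso
                        simp only [Set.mem_insert_iff, Set.mem_singleton_iff] at he
                        rcases he with rfl | rfl
                        · rw [Sym2.mem_iff] at hve
                          rcases hve with h | h
                          · exact hva2 h
                          · exact hvx2' h
                        · rw [Sym2.mem_iff] at hve
                          rcases hve with h | h
                          · exact hvb2 h
                          · exact hvw h
          have hMM := hU _ hM3pm
          have : s(a,x) ∈ M := by
            rw [← hMM]
            exact Or.inr (by simp)
          exact hxb (pm_partner_unique hM this hfM)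
        -- identify the bad edge's shape
        revert he1N he1bad
        induction e1 using Sym2.ind with
        | _ p' q' =>
          intro he1N he1bad
          have hadj1 : K.Adj p' q' := K.mem_edgeSet.mp (hN.1 he1N)
          rcases hadj1.1 with h | ⟨h1, h2⟩ | ⟨h1, h2⟩
          · exact he1bad (by rw [Sym2.map_pair_eq]; exact (G.mem_edgeSet).mpr h)
          · exact key p' q' hadj1 h1 h2 he1N
          · exact key q' p' hadj1.symm h1 h2 (by rwa [Sym2.eq_swap] at he1N)
    -- apply the induction hypothesis to K
    have hx2M' : (s((⟨x, hxS2⟩ : ↥S2), (⟨x2, hx2S2⟩ : ↥S2)) : Sym2 ↥S2) ∈ MS2 := by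
      rw [hMS2]
      simp only [Set.mem_setOf_eq, Sym2.map_pair_eq]
      exact hx2M
    have hKne : K.edgeSet.Nonempty := ⟨_, hKpm.1 hx2M'⟩
    have haS2 : a ∉ S2 := fun h => h.1 rfl
    have hcard : Fintype.card ↥S2 < Fintype.card V := Fintype.card_subtype_lt (x := a) haS2
    have hmeas : Fintype.card ↥S2 ^ 3 + K.edgeSet.ncard < n :=
      meas_lt hcard hn (edge_bound K)
    obtain ⟨h', hh'MS, hh'br⟩ := IH ↥S2 K MS2 hmeas hKpm hKuniq hKne
    revert hh'MS hh'br
    induction h' using Sym2.ind with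
    | _ c' d' =>
    intro hh'MS hh'br
    obtain ⟨c, hcS2⟩ := c'
    obtain ⟨d, hdS2⟩ := d'
    have hhM : s(c, d) ∈ M := by rw [hMS2] at hh'MS; simpa [Sym2.map_pair_eq] using hh'MS
    have hcd : G.Adj c d := G.mem_edgeSet.mp (hM.1 hhM)
    have patch_ne : ∀ u : V, G.Adj b u → s(x, u) ≠ s(c, d) := by
      intro u hbu h
      rw [← h] at hhM
      have := pm_partner_unique hM hhM hx2M
      rw [this] at hbu
      exact hD1 hbu
    set Kdel := K \ SimpleGraph.fromEdgeSet {(s(⟨c, hcS2⟩, ⟨d, hdS2⟩) : Sym2 ↥S2)} with hKdel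
    have hstep2 : ∀ (p q : ↥S2), K.Adj p q → s((p:V),(q:V)) ≠ s(c,d) → Kdel.Adj p q := by
      intro p q hpq hne
      rw [hKdel, SimpleGraph.sdiff_adj]
      refine ⟨hpq, ?_⟩
      rw [SimpleGraph.fromEdgeSet_adj]
      rintro ⟨he, -⟩
      rw [Set.mem_singleton_iff] at he
      apply hne
      have := congrArg (Sym2.map (Subtype.val : ↥S2 → V)) he
      simpa [Sym2.map_pair_eq] using this
    -- the master transfer for K
    have master2 : ∀ (u v : V) (p : G.Walk u v), s(c,d) ∉ p.edges →
        ∀ (hv : v ∈ S2),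
        (∀ (hu : u ∈ S2), Kdel.Reachable ⟨u, hu⟩ ⟨v, hv⟩) ∧
        ((u = a ∨ u = b) → Kdel.Reachable x'' ⟨v, hv⟩) := by
      intro u v p
      induction p with
      | nil =>
        intro hpe hv
        refine ⟨fun hu => Reachable.refl _, fun hu => ?_⟩
        rcases hu with h | h
        · exact absurd h hv.1
        · exact absurd h hv.2
      | @cons u w v hadj q ih =>
        intro hpe hv
        rw [SimpleGraph.Walk.edges_cons, List.mem_cons] at hpe
        push_neg at hpe
        obtain ⟨hne_head, hpe'⟩ := hpe
        have ihq := ih hpe' hv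
        constructor
        · intro hu
          by_cases hwa2 : w = a
          · -- u must be x (u ≠ b since u ∈ S2)
            have hux : u = x := by
              have : G.Adj a u := by
                rw [← hwa2]
                exact hadj.symm
              rcases hNa u this with h | h
              · exact absurd h hu.2
              · exact h
            have hgoal := ihq.2 (Or.inl hwa2)
            have : (⟨u, hu⟩ : ↥S2) = x'' := Subtype.ext hux
            rw [this]
            exact hgoal
          · by_cases hwb2 : w = b
            · have hbu : G.Adj b u := by
                rw [← hwb2]
                exact hadj.symm
              have hgoal := ihq.2 (Or.inr hwb2)
              by_cases hux : u = x
              · have : (⟨u, hu⟩ : ↥S2) = x'' := Subtype.ext hux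
                rw [this]
                exact hgoal
              · have hKadj : K.Adj ⟨u, hu⟩ x'' :=
                  ⟨Or.inr (Or.inr ⟨rfl, hbu⟩), fun h => hux (congrArg Subtype.val h)⟩
                have hne2 : s((u:V), (x:V)) ≠ s(c,d) := by
                  rw [Sym2.eq_swap]
                  exact patch_ne u hbu
                exact ((hstep2 _ _ hKadj hne2).reachable).trans hgoal
            · have hKadj : K.Adj ⟨u, hu⟩ ⟨w, ⟨hwa2, hwb2⟩⟩ :=
                ⟨Or.inl hadj, fun h => hadj.ne (congrArg Subtype.val h)⟩
              exact ((hstep2 _ _ hKadj (fun h => hne_head h.symm)).reachable).trans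
                (ihq.1 ⟨hwa2, hwb2⟩)
        · intro hu
          rcases hu with hua | hub
          · -- u = a : w = b or w = x
            have haw : G.Adj a w := by rw [← hua]; exact hadj
            rcases hNa w haw with hwb2 | hwx2
            · exact ihq.2 (Or.inr hwb2)
            · have hwS2 : w ∈ S2 := by rw [hwx2]; exact hxS2
              have hgoal := ihq.1 hwS2
              have : (⟨w, hwS2⟩ : ↥S2) = x'' := Subtype.ext hwx2
              rw [this] at hgoal
              exact hgoal
          · -- u = b
            have hbw : G.Adj b w := by rw [← hub]; exact hadj
            by_cases hwa2 : w = a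
            · exact ihq.2 (Or.inl hwa2)
            · have hwS2 : w ∈ S2 := ⟨hwa2, fun h => G.irrefl (h ▸ hbw)⟩
              have hgoal := ihq.1 hwS2
              by_cases hwx : w = x
              · have : (⟨w, hwS2⟩ : ↥S2) = x'' := Subtype.ext hwx
                rw [this] at hgoal
                exact hgoal
              · have hKadj : K.Adj x'' ⟨w, hwS2⟩ :=
                  ⟨Or.inr (Or.inl ⟨rfl, hbw⟩), fun h => hwx (congrArg Subtype.val h).symm⟩
                have hne2 : s((x:V), (w:V)) ≠ s(c,d) := patch_ne w hbw
                exact ((hstep2 _ _ hKadj hne2).reachable).trans hgoal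
    -- conclude
    have hnbr := hbr _ hhM
    rw [SimpleGraph.isBridge_iff] at hnbr
    push_neg at hnbr
    obtain ⟨p0, hp0⟩ := (SimpleGraph.reachable_delete_edges_iff_exists_walk).mp hnbr
    have hbridge := hh'br
    rw [SimpleGraph.isBridge_iff] at hbridge
    have hnoreach := hbridge
    apply hnoreach
    rw [SimpleGraph.deleteEdges, ← hKdel]
    exact (master2 c d p0 hp0 hdS2).1 hcS2


lemma side_combined [Fintype V] {n : ℕ}
    (IH : ∀ (W : Type u_1) [Fintype W] (H : SimpleGraph W) (N : Set (Sym2 W)),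
      Fintype.card W ^ 3 + H.edgeSet.ncard < n → IsPerfectMatching H N →
      (∀ N', IsPerfectMatching H N' → N' = N) → H.edgeSet.Nonempty →
      ∃ e ∈ N, H.IsBridge e)
    (hn : Fintype.card V ^ 3 ≤ n)
    (hM : IsPerfectMatching G M) (hU : ∀ M', IsPerfectMatching G M' → M' = M)
    (hbr : ∀ e ∈ M, ¬G.IsBridge e)
    (hfM : s(a,b) ∈ M) (hgE : s(x,y) ∈ G.edgeSet) (hgM : s(x,y) ∉ M)
    (hsep : ¬Avoid G s(a,b) s(x,y) a b)
    (hay : Avoid G s(a,b) s(x,y) a y) (hbx : Avoid G s(a,b) s(x,y) b x)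
    (hnmx : ¬MatchOn G {v | Avoid G s(a,b) s(x,y) b v ∧ v ≠ x}) : False := by
  have hba : ¬Avoid G s(a,b) s(x,y) b a := fun h => hsep h.symm
  have hxb : x ≠ b := by
    rintro rfl
    apply hnmx
    apply matchOn_of_closed hM
    rintro v ⟨hvB, hvx⟩ w hw
    have hwx : w ≠ x := by
      rintro rfl
      have h1 : s(w,v) ∈ M := by rw [Sym2.eq_swap]; exact hw
      have h2 : s(w,a) ∈ M := by rw [Sym2.eq_swap]; exact hfM
      exact hba ((pm_partner_unique hM h1 h2) ▸ hvB)
    refine ⟨?_, hwx⟩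
    rcases eq_or_ne s(v,w) s(a,x) with hef | hef
    · rw [Sym2.eq_iff] at hef
      rcases hef with ⟨h1, h2⟩ | ⟨h1, h2⟩
      · exact absurd (by rw [h1] at hvB; exact hvB) hba
      · exact absurd h1 hvx
    · have heg : s(v,w) ≠ s(x,y) := fun h => hgM (h ▸ hw)
      exact hvB.trans (Avoid.step (G.mem_edgeSet.mp (hM.1 hw)) hef heg)
  by_cases hout : ∃ z, ¬Avoid G s(a,b) s(x,y) b z ∧ z ≠ a
  · exact side_proper IH hn hM hU hbr hfM hgE hgM hsep hay hbx hxb hout hnmx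
  · push_neg at hout
    have hall : ∀ z, Avoid G s(a,b) s(x,y) b z ∨ z = a :=
      fun z => or_iff_not_imp_left.mpr (hout z)
    exact side_degenerate IH hn hM hU hbr hfM hgE hgM hsep hay hbx hxb hall

lemma main_step [Fintype V] {n : ℕ}
    (IH : ∀ (W : Type u_1) [Fintype W] (H : SimpleGraph W) (N : Set (Sym2 W)),
      Fintype.card W ^ 3 + H.edgeSet.ncard < n → IsPerfectMatching H N →
      (∀ N', IsPerfectMatching H N' → N' = N) → H.edgeSet.Nonempty →
      ∃ e ∈ N, H.IsBridge e)
    (hn : Fintype.card V ^ 3 ≤ n)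
    (hM : IsPerfectMatching G M) (hU : ∀ M', IsPerfectMatching G M' → M' = M)
    (hbr : ∀ e ∈ M, ¬G.IsBridge e)
    (hfM : s(a,b) ∈ M) (hgE : s(x,y) ∈ G.edgeSet) (hgM : s(x,y) ∉ M)
    (hsep : ¬Avoid G s(a,b) s(x,y) a b)
    (hay : Avoid G s(a,b) s(x,y) a y) (hbx : Avoid G s(a,b) s(x,y) b x) : False := by
  by_cases hmB : MatchOn G {v | Avoid G s(a,b) s(x,y) b v ∧ v ≠ x}
  · by_cases hmA : MatchOn G {v | Avoid G s(a,b) s(x,y) a v ∧ v ≠ y}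
    · exact case1 hM hU hfM hgE hgM hsep hay hbx hmA hmB
    · -- swap the roles of the two sides
      refine side_combined (a := b) (b := a) (x := y) (y := x) IH hn hM hU hbr ?_ ?_ ?_ ?_ ?_ ?_ ?_
      · rw [(Sym2.eq_swap : s(b,a) = s(a,b))]; exact hfM
      · rw [(Sym2.eq_swap : s(y,x) = s(x,y))]; exact hgE
      · rw [(Sym2.eq_swap : s(y,x) = s(x,y))]; exact hgM
      · rw [(Sym2.eq_swap : s(b,a) = s(a,b)), (Sym2.eq_swap : s(y,x) = s(x,y))]
        exact fun h => hsep h.symm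
      · rw [(Sym2.eq_swap : s(b,a) = s(a,b)), (Sym2.eq_swap : s(y,x) = s(x,y))]
        exact hbx
      · rw [(Sym2.eq_swap : s(b,a) = s(a,b)), (Sym2.eq_swap : s(y,x) = s(x,y))]
        exact hay
      · rw [(Sym2.eq_swap : s(b,a) = s(a,b)), (Sym2.eq_swap : s(y,x) = s(x,y))]
        exact hmA
  · exact side_combined IH hn hM hU hbr hfM hgE hgM hsep hay hbx hmB

end Side

theorem aux : ∀ (n : ℕ) (V : Type u_1) [Fintype V] (G : SimpleGraph V) (M : Set (Sym2 V)),
    Fintype.card V ^ 3 + G.edgeSet.ncard < n →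
    IsPerfectMatching G M → (∀ M', IsPerfectMatching G M' → M' = M) →
    G.edgeSet.Nonempty → ∃ e ∈ M, G.IsBridge e := by
  intro n
  induction n with
  | zero => intro V _ G M h; exact absurd h (Nat.not_lt_zero _)
  | succ n IH =>
    intro V instV G M hmeas hM hU hE
    by_contra hno
    push_neg at hno
    by_cases hsub : G.edgeSet ⊆ M
    · -- every edge is a matching edge : each edge is a bridge
      obtain ⟨e0, he0⟩ := hE
      revert he0
      induction e0 using Sym2.ind with
      | _ u v =>
      intro he0
      have he0M : s(u,v) ∈ M := hsub he0
      apply hno _ he0M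
      rw [SimpleGraph.isBridge_iff]
      have hadj : G.Adj u v := G.mem_edgeSet.mp he0
      rw [SimpleGraph.reachable_delete_edges_iff_exists_walk]
      rintro ⟨p, hp⟩
      cases p with
      | nil => exact hadj.ne rfl
      | @cons _ w _ hadj2 q =>
        have hw : s(u,w) ∈ M := hsub ((G.mem_edgeSet).mpr hadj2)
        have hwv : w = v := pm_partner_unique hM hw he0M
        apply hp
        rw [SimpleGraph.Walk.edges_cons]
        exact List.mem_cons.mpr (Or.inl (by rw [hwv]))
    · -- there is a non-matching edge g0
      have hsub' : ∃ e ∈ G.edgeSet, e ∉ M := by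
        by_contra h
        push_neg at h
        exact hsub h
      obtain ⟨g0, hg0E, hg0M⟩ := hsub'
      revert hg0E hg0M
      induction g0 using Sym2.ind with
      | _ x0 y0 =>
      intro hg0E hg0M
      set G' := G \ SimpleGraph.fromEdgeSet {s(x0,y0)} with hG'
      have hG'edge : G'.edgeSet = G.edgeSet \ {s(x0,y0)} := by
        simp [hG', edgeSet_sdiff, edgeSet_fromEdgeSet, edgeSet_sdiff_sdiff_isDiag]
      have hMG' : M ⊆ G'.edgeSet := by
        rw [hG'edge]
        exact fun e he => ⟨hM.1 he, fun h => hg0M (by rw [Set.mem_singleton_iff] at h; rw [← h]; exact he)⟩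
      have hG'pm : IsPerfectMatching G' M := ⟨hMG', hM.2⟩
      have hG'uniq : ∀ N, IsPerfectMatching G' N → N = M := by
        intro N hN
        refine hU N ⟨fun e he => ?_, hN.2⟩
        have := hN.1 he
        rw [hG'edge] at this
        exact this.1
      have hG'ne : G'.edgeSet.Nonempty := by
        obtain ⟨w0, hw0, -⟩ := pm_exists hM x0
        exact ⟨s(x0,w0), hMG' hw0⟩
      have hmeas' : Fintype.card V ^ 3 + G'.edgeSet.ncard < n := by
        have h1 : G'.edgeSet.ncard < G.edgeSet.ncard := by
          rw [hG'edge]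
          exact Set.ncard_diff_singleton_lt_of_mem hg0E (G.edgeSet.toFinite)
        omega
      have hn : Fintype.card V ^ 3 ≤ n := by
        have h2 : 0 < G.edgeSet.ncard := Set.ncard_pos (G.edgeSet.toFinite) |>.mpr hE
        omega
      obtain ⟨f0, hf0M, hf0br⟩ := IH V G' M hmeas' hG'pm hG'uniq hG'ne
      revert hf0br
      induction f0 using Sym2.ind with
      | _ a b =>
      intro hf0br
      have hadjab : G.Adj a b := G.mem_edgeSet.mp (hM.1 hf0M)
      -- separation from the bridge property in G'
      have hsep : ¬Avoid G s(a,b) s(x0,y0) a b := by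
        rintro ⟨p, hpf, hpg⟩
        rw [SimpleGraph.isBridge_iff] at hf0br
        apply hf0br
        rw [SimpleGraph.reachable_delete_edges_iff_exists_walk]
        refine ⟨p.transfer G' ?_, ?_⟩
        · intro e hep
          rw [hG'edge]
          refine ⟨p.edges_subset_edgeSet hep, fun h => ?_⟩
          rw [Set.mem_singleton_iff] at h
          rw [h] at hep
          exact hpg hep
        · rw [SimpleGraph.Walk.edges_transfer]
          exact hpf
      -- f0 is not a bridge of G
      have hnof := hno _ hf0M
      rw [SimpleGraph.isBridge_iff] at hnof
      push_neg at hnof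
      obtain ⟨pab, hpab⟩ := (SimpleGraph.reachable_delete_edges_iff_exists_walk).mp hnof
      rcases walk_decomp (x := x0) (y := y0) pab hpab with hcase | ⟨h1, h2⟩ | ⟨h1, h2⟩
      · exact hsep hcase
      · -- Avoid a x0 and Avoid y0 b : take x := y0, y := x0
        refine main_step (a := a) (b := b) (x := y0) (y := x0) IH hn hM hU hno hf0M ?_ ?_ ?_ ?_ ?_
        · rw [(Sym2.eq_swap : s(y0,x0) = s(x0,y0))]; exact hg0E
        · rw [(Sym2.eq_swap : s(y0,x0) = s(x0,y0))]; exact hg0M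
        · rw [(Sym2.eq_swap : s(y0,x0) = s(x0,y0))]; exact hsep
        · rw [(Sym2.eq_swap : s(y0,x0) = s(x0,y0))]; exact h1
        · rw [(Sym2.eq_swap : s(y0,x0) = s(x0,y0))]; exact h2.symm
      · -- Avoid a y0 and Avoid x0 b : take x := x0, y := y0
        exact main_step (a := a) (b := b) (x := x0) (y := y0) IH hn hM hU hno hf0M hg0E hg0M
          hsep h1 h2.symm

end Kotzig

/-- Kotzig's theorem: if `M` is the unique perfect matching of a finite simple
graph `G` having at least one edge, then `M` contains a bridge of `G`. -/
theorem stmt3 {V : Type*} [Fintype V] (G : SimpleGraph V) (M : Set (Sym2 V))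
    (hM : IsPerfectMatching G M)
    (hU : ∀ M', IsPerfectMatching G M' → M' = M)
    (hE : G.edgeSet.Nonempty) :
    ∃ e ∈ M, G.IsBridge e :=
  Kotzig.aux (Fintype.card V ^ 3 + G.edgeSet.ncard + 1) V G M (by omega) hM hU hE
end

section
/- Let G be a finite simple graph and M, M' matchings of G with |M'| > |M|. Then the symmetric difference M △ M' contains at least |M'| − |M| vertex-disjoint augmenting paths for M. -/
def IsMatching {V : Type*} (G : SimpleGraph V) (M : Set (Sym2 V)) : Prop :=
  M ⊆ G.edgeSet ∧ ∀ v : V, ∀ e ∈ M, ∀ f ∈ M, v ∈ e → v ∈ f → e = f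

def AltList {V : Type*} (M : Set (Sym2 V)) (l : List (Sym2 V)) : Prop :=
  List.Chain' (fun e f => (e ∈ M ↔ f ∉ M)) l

open SimpleGraph List

section Dev
variable {V : Type*} {G : SimpleGraph V}

lemma alt_symm (M : Set (Sym2 V)) :
    Symmetric (fun e f : Sym2 V => (e ∈ M ↔ f ∉ M)) := by
  intro e f h; by_cases he : e ∈ M <;> by_cases hf : f ∈ M <;> tauto

lemma altList_reverse {M : Set (Sym2 V)} {l : List (Sym2 V)} (h : AltList M l) :
    AltList M l.reverse := by
  rw [AltList, List.Chain', List.isChain_reverse]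
  exact h.imp (fun {a b} hab => alt_symm M hab)

lemma altList_congr {M M₂ : Set (Sym2 V)} {l : List (Sym2 V)}
    (hc : ∀ f ∈ l, f ∈ M ↔ f ∈ M₂) (h : AltList M l) : AltList M₂ l := by
  induction l with
  | nil => exact List.isChain_nil
  | cons a t ih =>
    match t, h with
    | [], _ => exact List.isChain_singleton a
    | b :: t, h =>
      rw [AltList, List.Chain', List.isChain_cons_cons] at h ⊢
      refine ⟨?_, ih (fun f hf => hc f (List.mem_cons_of_mem a hf)) h.2⟩
      have ha := hc a (by simp)
      have hb := hc b (by simp)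
      tauto

/-- first edge of a nonempty walk contains the start vertex -/
lemma start_mem_head? {a b : V} (p : G.Walk a b) :
    ∀ f ∈ p.edges.head?, a ∈ f := by
  cases p with
  | nil => simp
  | cons h q => intro f hf; simp at hf; subst hf; simp

lemma edges_ne_nil {a b : V} (p : G.Walk a b) (hab : a ≠ b) : p.edges ≠ [] := by
  cases p with
  | nil => exact absurd rfl hab
  | cons h q => simp

lemma start_mem_first_edge {a b : V} (p : G.Walk a b) (hab : a ≠ b) :
    ∃ f, f ∈ p.edges.head? ∧ f ∈ p.edges ∧ a ∈ f := by
  have hne := edges_ne_nil p hab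
  refine ⟨p.edges.head hne, List.head?_eq_head hne, List.head_mem hne, ?_⟩
  exact start_mem_head? p _ (List.head?_eq_head hne)

end Dev

section Dev2
variable {V : Type*} {G : SimpleGraph V}

structure Aug (G : SimpleGraph V) (M D : Set (Sym2 V)) where
  a : V
  b : V
  w : G.Walk a b
  path : w.IsPath
  alt : AltList M w.edges
  ne : a ≠ b
  ha : ∀ e ∈ M, a ∉ e
  hb : ∀ e ∈ M, b ∉ e
  sub : ∀ e ∈ w.edges, e ∈ D

def Disj {M D : Set (Sym2 V)} (p q : Aug G M D) : Prop :=
  ∀ x, x ∈ p.w.support → x ∉ q.w.support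

lemma disj_symm {M D : Set (Sym2 V)} : Symmetric (Disj (G := G) (M := M) (D := D)) := by
  intro p q h x hxq hxp
  exact h x hxp hxq

/-- reverse an augmenting path -/
def Aug.rev {M D : Set (Sym2 V)} (p : Aug G M D) : Aug G M D where
  a := p.b
  b := p.a
  w := p.w.reverse
  path := p.path.reverse
  alt := by rw [SimpleGraph.Walk.edges_reverse]; exact altList_reverse p.alt
  ne := p.ne.symm
  ha := p.hb
  hb := p.ha
  sub := by
    intro e he
    rw [SimpleGraph.Walk.edges_reverse, List.mem_reverse] at he
    exact p.sub e he

@[simp] lemma Aug.rev_support {M D : Set (Sym2 V)} (p : Aug G M D) :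
    p.rev.w.support = p.w.support.reverse := SimpleGraph.Walk.support_reverse _

/-- convert an augmenting path to a different matching/symmdiff pair -/
def Aug.convert {M D M₂ D₂ : Set (Sym2 V)} (p : Aug G M D)
    (hD : ∀ f ∈ D, f ∈ D₂) (hMD : ∀ f ∈ D, (f ∈ M ↔ f ∈ M₂))
    (hA : ∀ f ∈ M₂, p.a ∉ f) (hB : ∀ f ∈ M₂, p.b ∉ f) : Aug G M₂ D₂ where
  a := p.a
  b := p.b
  w := p.w
  path := p.path
  alt := altList_congr (fun f hf => hMD f (p.sub f hf)) p.alt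
  ne := p.ne
  ha := hA
  hb := hB
  sub := fun e he => hD e (p.sub e he)

@[simp] lemma Aug.convert_support {M D M₂ D₂ : Set (Sym2 V)} (p : Aug G M D)
    (hD) (hMD) (hA) (hB) :
    (p.convert (M₂ := M₂) (D₂ := D₂) hD hMD hA hB).w.support = p.w.support := rfl

/-- a single edge of M' (with M-uncovered endpoints) gives an augmenting path -/
def Aug.single {M D : Set (Sym2 V)} {x y : V} (hadj : G.Adj x y)
    (hx : ∀ e ∈ M, x ∉ e) (hy : ∀ e ∈ M, y ∉ e) (hD : s(x, y) ∈ D) : Aug G M D where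
  a := x
  b := y
  w := SimpleGraph.Walk.cons hadj SimpleGraph.Walk.nil
  path := by simp [hadj.ne]
  alt := List.isChain_singleton _
  ne := hadj.ne
  ha := hx
  hb := hy
  sub := by intro e he; simp at he; subst he; exact hD

lemma Aug.single_support {M D : Set (Sym2 V)} {x y : V} (hadj : G.Adj x y)
    (hx) (hy) (hD) :
    (Aug.single (M := M) (D := D) hadj hx hy hD).w.support = [x, y] := rfl

end Dev2

section Dev3
variable {V : Type*} {G : SimpleGraph V}

lemma base_list {M' : Set (Sym2 V)} (hM' : IsMatching G M') :
    ∀ l : List (Sym2 V), l.Nodup → (∀ e ∈ l, e ∈ M') →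
    ∃ L : List (Aug G (∅ : Set (Sym2 V)) M'), L.length = l.length ∧ L.Pairwise Disj ∧
      (∀ p ∈ L, ∀ x ∈ p.w.support, ∃ f ∈ l, x ∈ f) := by
  intro l
  induction l with
  | nil => exact fun _ _ => ⟨[], rfl, List.Pairwise.nil, by simp⟩
  | cons e t ih =>
    intro hnd hsub
    obtain ⟨L, hlen, hpw, hcov⟩ := ih hnd.of_cons (fun f hf => hsub f (List.mem_cons_of_mem e hf))
    have heM' : e ∈ M' := hsub e (List.mem_cons_self)
    have heG : e ∈ G.edgeSet := hM'.1 heM'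
    induction e using Sym2.inductionOn with
    | hf x y =>
      have hadj : G.Adj x y := heG
      refine ⟨Aug.single (M := (∅ : Set (Sym2 V))) hadj (by simp) (by simp) heM' :: L,
        by simp [hlen], ?_, ?_⟩
      · refine List.Pairwise.cons ?_ hpw
        intro q hq z hz hzq
        rw [Aug.single_support] at hz
        obtain ⟨f, hf, hzf⟩ := hcov q hq z hzq
        have hz' : z ∈ s(x, y) := by
          rcases List.mem_pair.mp hz with rfl | rfl <;> simp
        have := hM'.2 z _ heM' _ (hsub f (List.mem_cons_of_mem _ hf)) hz' hzf
        exact (List.nodup_cons.mp hnd).1 (this ▸ hf)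
      · intro p hp z hz
        rcases List.mem_cons.mp hp with rfl | hp
        · rw [Aug.single_support] at hz
          refine ⟨s(x, y), List.mem_cons_self, ?_⟩
          rcases List.mem_pair.mp hz with rfl | rfl <;> simp
        · obtain ⟨f, hf, hzf⟩ := hcov p hp z hz
          exact ⟨f, List.mem_cons_of_mem _ hf, hzf⟩

end Dev3

section Dev4
variable {V : Type*} {G : SimpleGraph V}

lemma symmDiff_erase {M M' : Set (Sym2 V)} {e : Sym2 V} (he : e ∈ M) (he' : e ∉ M') :
    symmDiff (M \ {e}) M' = symmDiff M M' \ {e} := by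
  ext x
  by_cases hxe : x = e
  · subst hxe
    simp [Set.mem_symmDiff, he, he']
  · simp [Set.mem_symmDiff, hxe]

lemma mem_erase_iff_of_symmDiff {M M' : Set (Sym2 V)} {e : Sym2 V} (he : e ∈ M)
    (he' : e ∉ M') {f : Sym2 V} (hf : f ∈ symmDiff (M \ {e}) M') :
    f ∈ M \ {e} ↔ f ∈ M := by
  rw [symmDiff_erase he he'] at hf
  have : f ≠ e := hf.2
  simp [this]

lemma merge_aug {M M' : Set (Sym2 V)} {u v : V} (hM : IsMatching G M)
    (he : s(u, v) ∈ M) (heM' : s(u, v) ∉ M')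
    (P Q : Aug G (M \ {s(u, v)}) (symmDiff (M \ {s(u, v)}) M'))
    (hPa : P.a = u) (hQa : Q.a = v) (hdisj : Disj P Q) :
    ∃ R : Aug G M (symmDiff M M'),
      ∀ x, x ∈ R.w.support ↔ (x ∈ P.w.support ∨ x ∈ Q.w.support) := by
  have hdisj' : ∀ x, x ∈ P.w.support → x ∉ Q.w.support := hdisj
  have hDsub : ∀ f ∈ symmDiff (M \ {s(u, v)}) M', f ∈ symmDiff M M' := by
    intro f hf
    rw [symmDiff_erase he heM'] at hf
    exact hf.1
  have hMM₀ : ∀ f ∈ symmDiff (M \ {s(u, v)}) M', (f ∈ M \ {s(u, v)} ↔ f ∈ M) :=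
    fun f hf => mem_erase_iff_of_symmDiff he heM' hf
  have hPalt : AltList M P.w.edges := altList_congr (fun f hf => hMM₀ f (P.sub f hf)) P.alt
  have hQalt : AltList M Q.w.edges := altList_congr (fun f hf => hMM₀ f (Q.sub f hf)) Q.alt
  have hfirst : ∀ (c d : V) (W : G.Walk c d), c ≠ d → (∀ f ∈ W.edges, f ∈ symmDiff (M \ {s(u, v)}) M') →
      (∀ f ∈ M \ {s(u, v)}, c ∉ f) → ∀ f ∈ W.edges.head?, f ∉ M := by
    intro c d W hcd hWD hc f hf hfM
    have hcf : c ∈ f := start_mem_head? W f hf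
    have hfD := hWD f (List.mem_of_mem_head? hf)
    exact hc f ((hMM₀ f hfD).mpr hfM) hcf
  have hadj : G.Adj v u := (G.mem_edgeSet.mp (hM.1 he)).symm
  obtain ⟨pa, pb, pw, ppath, palt, pne, pha, phb, psub⟩ := P
  obtain ⟨qa, qb, qw, qpath, qalt, qne, qha, qhb, qsub⟩ := Q
  simp only at hPa hQa hPalt hQalt hdisj' pne pha phb psub qne qha qhb qsub ppath qpath ⊢
  subst hPa hQa
  have huP : pa ∈ pw.support := pw.start_mem_support
  have hvQ : qa ∈ qw.support := qw.start_mem_support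
  refine ⟨⟨qb, pb, (qw.reverse.append (SimpleGraph.Walk.cons hadj pw)), ?_, ?_, ?_, ?_, ?_, ?_⟩,
    ?_⟩
  · -- IsPath
    rw [SimpleGraph.Walk.isPath_def, SimpleGraph.Walk.support_append,
      SimpleGraph.Walk.support_reverse]
    simp only [SimpleGraph.Walk.support_cons, List.tail_cons]
    refine List.Nodup.append (List.nodup_reverse.mpr qpath.support_nodup) ppath.support_nodup ?_
    intro x hxq hxp
    exact hdisj' x hxp (List.mem_reverse.mp hxq)
  · -- AltList
    rw [AltList, List.Chain', SimpleGraph.Walk.edges_append, SimpleGraph.Walk.edges_reverse,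
      SimpleGraph.Walk.edges_cons, List.isChain_append]
    refine ⟨altList_reverse hQalt, ?_, ?_⟩
    · rw [List.isChain_cons]
      refine ⟨?_, hPalt⟩
      intro y hy
      have hyM : y ∉ M := hfirst pa pb pw pne psub pha y hy
      have hvu : s(qa, pa) ∈ M := by rw [Sym2.eq_swap]; exact he
      tauto
    · intro x hx y hy
      rw [List.getLast?_reverse] at hx
      have hxM : x ∉ M := hfirst qa qb qw qne qsub qha x hx
      simp only [List.head?_cons, Option.mem_def, Option.some.injEq] at hy
      subst hy
      have hvu : s(qa, pa) ∈ M := by rw [Sym2.eq_swap]; exact he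
      tauto
  · -- endpoints distinct
    intro h
    exact hdisj' pb pw.end_mem_support (h ▸ qw.end_mem_support)
  · -- qb uncovered by M
    intro f hf hqbf
    by_cases hfe : f = s(pa, qa)
    · subst hfe
      rcases Sym2.mem_iff.mp hqbf with h | h
      · exact hdisj' pa huP (h ▸ qw.end_mem_support)
      · exact qne h.symm
    · exact qhb f ⟨hf, hfe⟩ hqbf
  · -- pb uncovered by M
    intro f hf hpbf
    by_cases hfe : f = s(pa, qa)
    · subst hfe
      rcases Sym2.mem_iff.mp hpbf with h | h
      · exact pne h.symm
      · exact hdisj' pb pw.end_mem_support (by rw [h]; exact hvQ)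
    · exact phb f ⟨hf, hfe⟩ hpbf
  · -- edges in symmDiff
    intro f hf
    rw [SimpleGraph.Walk.edges_append, SimpleGraph.Walk.edges_reverse,
      SimpleGraph.Walk.edges_cons] at hf
    rcases List.mem_append.mp hf with hf | hf
    · exact hDsub f (qsub f (List.mem_reverse.mp hf))
    · rcases List.mem_cons.mp hf with rfl | hf
      · have h1 : s(qa, pa) = s(pa, qa) := Sym2.eq_swap
        rw [Set.mem_symmDiff, h1]
        exact Or.inl ⟨he, heM'⟩
      · exact hDsub f (psub f hf)
  · -- support characterization
    intro x
    simp only [SimpleGraph.Walk.mem_support_append_iff, SimpleGraph.Walk.support_reverse,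
      List.mem_reverse, SimpleGraph.Walk.support_cons, List.mem_cons]
    constructor
    · rintro (h | rfl | h)
      · exact Or.inr h
      · exact Or.inr hvQ
      · exact Or.inl h
    · rintro (h | h)
      · exact Or.inr (Or.inr h)
      · exact Or.inl h

end Dev4

section Dev5
variable {V : Type*} {G : SimpleGraph V}

lemma partition_list {α : Type*} (P : α → Prop) :
    ∀ L : List α, ∃ L₁ L₂ : List α,
      (∀ x ∈ L₁, P x) ∧ (∀ x ∈ L₂, ¬ P x) ∧ L.Perm (L₁ ++ L₂) := by
  intro L
  induction L with
  | nil => exact ⟨[], [], by simp, by simp, List.Perm.refl _⟩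
  | cons a t ih =>
    obtain ⟨L₁, L₂, h1, h2, hp⟩ := ih
    by_cases ha : P a
    · refine ⟨a :: L₁, L₂, ?_, h2, ?_⟩
      · intro x hx; rcases List.mem_cons.mp hx with rfl | hx
        · exact ha
        · exact h1 x hx
      · exact (hp.cons a)
    · refine ⟨L₁, a :: L₂, h1, ?_, ?_⟩
      · intro x hx; rcases List.mem_cons.mp hx with rfl | hx
        · exact ha
        · exact h2 x hx
      · exact (hp.cons a).trans List.perm_middle.symm

lemma convert_list {M D M₂ D₂ : Set (Sym2 V)} (L : List (Aug G M D))
    (hD : ∀ f ∈ D, f ∈ D₂) (hMD : ∀ f ∈ D, (f ∈ M ↔ f ∈ M₂))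
    (hend : ∀ p ∈ L, (∀ f ∈ M₂, p.a ∉ f) ∧ (∀ f ∈ M₂, p.b ∉ f))
    (hpw : L.Pairwise Disj) :
    ∃ L₂ : List (Aug G M₂ D₂), L₂.length = L.length ∧ L₂.Pairwise Disj ∧
      ∀ q ∈ L₂, ∃ p ∈ L, q.w.support = p.w.support := by
  induction L with
  | nil => exact ⟨[], rfl, List.Pairwise.nil, by simp⟩
  | cons a t ih =>
    obtain ⟨L₂, hlen, hpw₂, hsupp⟩ := ih (fun p hp => hend p (List.mem_cons_of_mem a hp))
      hpw.of_cons
    have hea := hend a (List.mem_cons_self)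
    refine ⟨a.convert hD hMD hea.1 hea.2 :: L₂, by simp [hlen], ?_, ?_⟩
    · refine List.Pairwise.cons ?_ hpw₂
      intro q hq
      obtain ⟨p, hp, hqp⟩ := hsupp q hq
      have hdisj : Disj a p := (List.pairwise_cons.mp hpw).1 p hp
      intro x hx
      rw [Aug.convert_support] at hx
      rw [hqp]
      exact hdisj x hx
    · intro q hq
      rcases List.mem_cons.mp hq with rfl | hq
      · exact ⟨a, List.mem_cons_self, rfl⟩
      · obtain ⟨p, hp, hqp⟩ := hsupp q hq
        exact ⟨p, List.mem_cons_of_mem a hp, hqp⟩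

lemma at_most_two {M D : Set (Sym2 V)} {u v : V} (Lb : List (Aug G M D))
    (hpw : Lb.Pairwise Disj)
    (hw : ∀ p ∈ Lb, u ∈ p.w.support ∨ v ∈ p.w.support) : Lb.length ≤ 2 := by
  by_contra h3
  push_neg at h3
  match Lb, h3 with
  | p0 :: p1 :: p2 :: r, _ =>
    have d01 : Disj p0 p1 := (List.pairwise_cons.mp hpw).1 p1 (by simp)
    have d02 : Disj p0 p2 := (List.pairwise_cons.mp hpw).1 p2 (by simp)
    have d12 : Disj p1 p2 := (List.pairwise_cons.mp hpw.of_cons).1 p2 (by simp)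
    have h0 := hw p0 (by simp)
    have h1 := hw p1 (by simp)
    have h2 := hw p2 (by simp)
    rcases h0 with h0 | h0 <;> rcases h1 with h1 | h1 <;> rcases h2 with h2 | h2 <;>
      first
        | exact d01 _ h0 h1
        | exact d02 _ h0 h2
        | exact d12 _ h1 h2

lemma symmDiff_erase_erase {M M' : Set (Sym2 V)} {e : Sym2 V} (he : e ∈ M) (he' : e ∈ M') :
    symmDiff (M \ {e}) (M' \ {e}) = symmDiff M M' := by
  ext x
  by_cases hxe : x = e
  · subst hxe
    simp [Set.mem_symmDiff, he, he']
  · simp [Set.mem_symmDiff, hxe]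

lemma matching_mono {M N : Set (Sym2 V)} (hM : IsMatching G M) (hNM : N ⊆ M) :
    IsMatching G N :=
  ⟨fun _ h => hM.1 (hNM h), fun v e he f hf hve hvf => hM.2 v e (hNM he) f (hNM hf) hve hvf⟩

end Dev5

section Dev6
variable {V : Type*} {G : SimpleGraph V}

lemma mem_list_of_eq {α : Type*} {l : List α} {x y : α} (h : x = y) (hx : x ∈ l) : y ∈ l :=
  h ▸ hx

lemma endpoint_uncovered_common {M M' : Set (Sym2 V)} (hM' : IsMatching G M') {e : Sym2 V}
    (heM : e ∈ M) (heM' : e ∈ M')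
    (p : Aug G (M \ {e}) (symmDiff (M \ {e}) (M' \ {e}))) : ∀ f ∈ M, p.a ∉ f := by
  intro f hf haf
  by_cases hfe : f = e
  · subst hfe
    obtain ⟨g, _, hgmem, hag⟩ := start_mem_first_edge p.w p.ne
    have hgD := p.sub g hgmem
    rw [symmDiff_erase_erase heM heM'] at hgD
    have hge : g ≠ f := by
      rintro rfl
      simp [Set.mem_symmDiff, heM, heM'] at hgD
    rw [Set.mem_symmDiff] at hgD
    rcases hgD with ⟨hgM, _⟩ | ⟨hgM', _⟩
    · exact p.ha g ⟨hgM, hge⟩ hag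
    · exact hge (hM'.2 p.a g hgM' f heM' hag haf)
  · exact p.ha f ⟨hf, hfe⟩ haf

lemma case_M_empty [Fintype V] {M' : Set (Sym2 V)} (hM' : IsMatching G M') :
    ∃ L : List (Aug G (∅ : Set (Sym2 V)) (symmDiff (∅ : Set (Sym2 V)) M')),
      M'.ncard ≤ L.length ∧ L.Pairwise Disj := by
  have hfin : M'.Finite := Set.toFinite _
  obtain ⟨L, hlen, hpw, _⟩ := base_list hM' hfin.toFinset.toList (Finset.nodup_toList _)
    (fun e he => hfin.mem_toFinset.mp (Finset.mem_toList.mp he))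
  obtain ⟨L₂, hlen₂, hpw₂, _⟩ := convert_list L
    (fun f hf => Set.mem_symmDiff.mpr (Or.inr ⟨hf, fun h => h⟩))
    (fun f _ => Iff.rfl) (fun p _ => ⟨p.ha, p.hb⟩) hpw
  refine ⟨L₂, ?_, hpw₂⟩
  rw [hlen₂, hlen, Finset.length_toList]
  exact le_of_eq (Set.ncard_eq_toFinset_card M' hfin)

lemma orient {M D : Set (Sym2 V)} {u v : V} (p : Aug G M D)
    (h : p.a = u ∨ p.a = v ∨ p.b = u ∨ p.b = v) :
    ∃ q : Aug G M D, (q.a = u ∨ q.a = v) ∧ ∀ x, x ∈ q.w.support ↔ x ∈ p.w.support := by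
  rcases h with h | h | h | h
  · exact ⟨p, Or.inl h, fun x => Iff.rfl⟩
  · exact ⟨p, Or.inr h, fun x => Iff.rfl⟩
  · exact ⟨p.rev, Or.inl h, fun x => by simp⟩
  · exact ⟨p.rev, Or.inr h, fun x => by simp⟩

lemma main_aux [Fintype V] (G : SimpleGraph V) :
    ∀ k : ℕ, ∀ M M' : Set (Sym2 V), M.ncard ≤ k → IsMatching G M → IsMatching G M' →
    ∃ L : List (Aug G M (symmDiff M M')), M'.ncard - M.ncard ≤ L.length ∧
      L.Pairwise Disj := by
  intro k
  induction k with
  | zero =>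
    intro M M' hk hM hM'
    have hM0 : M = ∅ := (Set.ncard_eq_zero (Set.toFinite M)).mp (Nat.le_zero.mp hk)
    subst hM0
    simpa using case_M_empty hM'
  | succ k ih =>
    intro M M' hk hM hM'
    by_cases hME : M = ∅
    · subst hME
      simpa using case_M_empty hM'
    have hMpos : 1 ≤ M.ncard :=
      (Set.ncard_pos (Set.toFinite M)).mpr (Set.nonempty_iff_ne_empty.mpr hME)
    by_cases hcom : (M ∩ M').Nonempty
    · -- a common edge: remove it from both
      obtain ⟨e, heM, heM'⟩ := hcom
      have hM'pos : 1 ≤ M'.ncard := (Set.ncard_pos (Set.toFinite M')).mpr ⟨e, heM'⟩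
      have h1 : (M \ {e}).ncard = M.ncard - 1 := Set.ncard_diff_singleton_of_mem heM
      have h2 : (M' \ {e}).ncard = M'.ncard - 1 := Set.ncard_diff_singleton_of_mem heM'
      obtain ⟨L, hlen, hpw⟩ := ih (M \ {e}) (M' \ {e}) (by omega)
        (matching_mono hM Set.diff_subset) (matching_mono hM' Set.diff_subset)
      have hDeq : symmDiff (M \ {e}) (M' \ {e}) = symmDiff M M' :=
        symmDiff_erase_erase heM heM'
      have hMD : ∀ f ∈ symmDiff (M \ {e}) (M' \ {e}), (f ∈ M \ {e} ↔ f ∈ M) := by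
        intro f hf
        rw [hDeq, Set.mem_symmDiff] at hf
        have hfe : f ≠ e := by rintro rfl; tauto
        simp [hfe]
      obtain ⟨L₂, hlen₂, hpw₂, _⟩ := convert_list L (fun f hf => hDeq ▸ hf) hMD
        (fun p _ => ⟨endpoint_uncovered_common hM' heM heM' p,
          endpoint_uncovered_common hM' heM heM' p.rev⟩) hpw
      refine ⟨L₂, ?_, hpw₂⟩
      rw [h1, h2] at hlen
      rw [hlen₂]
      omega
    · -- no common edge
      by_cases hle : M'.ncard ≤ M.ncard
      · exact ⟨[], by omega, List.Pairwise.nil⟩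
      push_neg at hle
      obtain ⟨e, heM⟩ := Set.nonempty_iff_ne_empty.mpr hME
      have heM' : e ∉ M' := fun h => hcom ⟨e, heM, h⟩
      revert heM heM'
      induction e using Sym2.inductionOn with
      | hf u v =>
        intro heM heM'
        have h1 : (M \ {s(u, v)}).ncard = M.ncard - 1 := Set.ncard_diff_singleton_of_mem heM
        obtain ⟨L, hlen, hpw⟩ := ih (M \ {s(u, v)}) M' (by omega)
          (matching_mono hM Set.diff_subset) hM'
        have hd1 : M'.ncard - M.ncard + 1 ≤ L.length := by rw [h1] at hlen; omega
        obtain ⟨Lb, Lg, hLb, hLg, hperm⟩ := partition_list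
          (fun p : Aug G (M \ {s(u, v)}) (symmDiff (M \ {s(u, v)}) M') =>
            p.a = u ∨ p.a = v ∨ p.b = u ∨ p.b = v) L
        have hpw' : (Lb ++ Lg).Pairwise Disj := (hperm.pairwise_iff (fun {p q} h => disj_symm h)).mp hpw
        have hpwb : Lb.Pairwise Disj :=
          List.Pairwise.sublist (List.sublist_append_left Lb Lg) hpw'
        have hpwg : Lg.Pairwise Disj :=
          List.Pairwise.sublist (List.sublist_append_right Lb Lg) hpw'
        have hcross : ∀ a ∈ Lb, ∀ b ∈ Lg, Disj a b := (List.pairwise_append.mp hpw').2.2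
        have hlen' : Lb.length + Lg.length = L.length := by
          have := hperm.length_eq
          rw [List.length_append] at this
          omega
        have hb2 : Lb.length ≤ 2 := by
          refine at_most_two (u := u) (v := v) Lb hpwb ?_
          intro p hp
          rcases hLb p hp with h | h | h | h
          · exact Or.inl (mem_list_of_eq h p.w.start_mem_support)
          · exact Or.inr (mem_list_of_eq h p.w.start_mem_support)
          · exact Or.inl (mem_list_of_eq h p.w.end_mem_support)
          · exact Or.inr (mem_list_of_eq h p.w.end_mem_support)
        have hDsub : ∀ f ∈ symmDiff (M \ {s(u, v)}) M', f ∈ symmDiff M M' := by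
          intro f hf
          rw [symmDiff_erase heM heM'] at hf
          exact hf.1
        have hMD : ∀ f ∈ symmDiff (M \ {s(u, v)}) M', (f ∈ M \ {s(u, v)} ↔ f ∈ M) :=
          fun f hf => mem_erase_iff_of_symmDiff heM heM' hf
        have hgend : ∀ p ∈ Lg, (∀ f ∈ M, p.a ∉ f) ∧ (∀ f ∈ M, p.b ∉ f) := by
          intro p hp
          have hbad := hLg p hp
          push_neg at hbad
          obtain ⟨hau, hav, hbu, hbv⟩ := hbad
          constructor <;> intro f hf hmem <;> by_cases hfe : f = s(u, v)
          · subst hfe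
            rcases Sym2.mem_iff.mp hmem with h | h
            exacts [hau h, hav h]
          · exact p.ha f ⟨hf, hfe⟩ hmem
          · subst hfe
            rcases Sym2.mem_iff.mp hmem with h | h
            exacts [hbu h, hbv h]
          · exact p.hb f ⟨hf, hfe⟩ hmem
        obtain ⟨Lg₂, hglen, hgpw, hgsupp⟩ := convert_list Lg hDsub hMD hgend hpwg
        by_cases henough : M'.ncard - M.ncard ≤ Lg₂.length
        · exact ⟨Lg₂, henough, hgpw⟩
        · -- exactly two bad paths: merge them
          push_neg at henough
          have hb2' : 2 ≤ Lb.length := by omega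
          match Lb, hpwb, hLb, hb2, hb2', hcross, hlen' with
          | [P, Q], hpwb, hLb, _, _, hcross, hlen' =>
            have hPQ : Disj P Q := (List.pairwise_cons.mp hpwb).1 Q (by simp)
            obtain ⟨P', hP'a, hP's⟩ := orient P (hLb P (by simp))
            obtain ⟨Q', hQ'a, hQ's⟩ := orient Q (hLb Q (by simp))
            have hdisj' : Disj P' Q' := by
              intro x hx hy
              exact hPQ x ((hP's x).mp hx) ((hQ's x).mp hy)
            have hmerge : ∃ R : Aug G M (symmDiff M M'),
                ∀ x, x ∈ R.w.support ↔ (x ∈ P.w.support ∨ x ∈ Q.w.support) := by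
              rcases hP'a with hPa | hPa <;> rcases hQ'a with hQa | hQa
              · exfalso
                exact hPQ u ((hP's u).mp (mem_list_of_eq hPa P'.w.start_mem_support))
                  ((hQ's u).mp (mem_list_of_eq hQa Q'.w.start_mem_support))
              · obtain ⟨R, hR⟩ := merge_aug hM heM heM' P' Q' hPa hQa hdisj'
                exact ⟨R, fun x => by rw [hR x, hP's x, hQ's x]⟩
              · obtain ⟨R, hR⟩ := merge_aug hM heM heM' Q' P' hQa hPa
                  (disj_symm hdisj')
                exact ⟨R, fun x => by rw [hR x, hP's x, hQ's x, or_comm]⟩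
              · exfalso
                exact hPQ v ((hP's v).mp (mem_list_of_eq hPa P'.w.start_mem_support))
                  ((hQ's v).mp (mem_list_of_eq hQa Q'.w.start_mem_support))
            obtain ⟨R, hRsupp⟩ := hmerge
            refine ⟨R :: Lg₂, ?_, ?_⟩
            · simp only [List.length_cons]
              omega
            · refine List.Pairwise.cons ?_ hgpw
              intro q hq x hx hxq
              obtain ⟨g, hg, hqg⟩ := hgsupp q hq
              rw [hqg] at hxq
              rcases (hRsupp x).mp hx with h | h
              · exact hcross P (by simp) g hg x h hxq
              · exact hcross Q (by simp) g hg x h hxq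

end Dev6


/-- If `M`, `M'` are matchings of `G` with `|M'| > |M|`, then `M △ M'` contains
at least `|M'| − |M|` pairwise vertex-disjoint augmenting paths for `M`. -/
theorem stmt5 {V : Type*} [Fintype V] (G : SimpleGraph V) (M M' : Set (Sym2 V))
    (hM : IsMatching G M) (hM' : IsMatching G M') (hlt : M.ncard < M'.ncard) :
    ∃ (n : ℕ) (a b : Fin n → V) (P : ∀ i, G.Walk (a i) (b i)),
      n = M'.ncard - M.ncard ∧
      (∀ i, (P i).IsPath ∧ AltList M (P i).edges ∧ a i ≠ b i ∧
        (∀ e ∈ M, a i ∉ e) ∧ (∀ e ∈ M, b i ∉ e) ∧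
        ∀ e ∈ (P i).edges, e ∈ symmDiff M M') ∧
      (∀ i j, i ≠ j → ∀ x, x ∈ (P i).support → x ∉ (P j).support) := by
  obtain ⟨L, hlen, hpw⟩ := main_aux G M.ncard M M' le_rfl hM hM'
  set n := M'.ncard - M.ncard with hn
  set L' := L.take n with hL'
  have hlen' : L'.length = n := by rw [hL', List.length_take]; omega
  have hpw' : L'.Pairwise Disj := List.Pairwise.sublist (List.take_sublist n L) hpw
  refine ⟨n, fun i => (L'.get (Fin.cast hlen'.symm i)).a,
    fun i => (L'.get (Fin.cast hlen'.symm i)).b,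
    fun i => (L'.get (Fin.cast hlen'.symm i)).w, rfl, ?_, ?_⟩
  · intro i
    exact ⟨(L'.get (Fin.cast hlen'.symm i)).path, (L'.get (Fin.cast hlen'.symm i)).alt,
      (L'.get (Fin.cast hlen'.symm i)).ne, (L'.get (Fin.cast hlen'.symm i)).ha,
      (L'.get (Fin.cast hlen'.symm i)).hb, (L'.get (Fin.cast hlen'.symm i)).sub⟩
  · intro i j hij x hxi hxj
    have hne : (Fin.cast hlen'.symm i) ≠ (Fin.cast hlen'.symm j) := by
      intro h
      apply hij
      have := congrArg Fin.val h
      exact Fin.ext this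

    rcases lt_or_gt_of_ne hne with h | h
    · exact (List.pairwise_iff_get.mp hpw' _ _ h) x hxi hxj
    · exact (List.pairwise_iff_get.mp hpw' _ _ h) x hxj hxi
end

section
/- Let G be a finite simple graph with a unique perfect matching M, and let e, f ∈ M. If e blossom-binds f (i.e., e is the stem of some blossom C for M with f an edge of M ∩ C), then in every bridge-deletion ordering of M the edge e occurs before f. -/
/-- The subgraph of `G` induced by the vertex set `S` (viewed as a graph on the
same vertex type: only edges with both endpoints in `S` are kept). -/
def GraphOn {V : Type*} (G : SimpleGraph V) (S : Set V) : SimpleGraph V where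
  Adj a b := G.Adj a b ∧ a ∈ S ∧ b ∈ S
  symm := ⟨by rintro a b ⟨h, ha, hb⟩; exact ⟨h.symm, hb, ha⟩⟩
  loopless := ⟨by rintro a ⟨h, _, _⟩; exact (G.ne_of_adj h) rfl⟩

/-- A bridge-deletion ordering: an enumeration of matching edges such that each
edge is a bridge of the subgraph induced by deleting the endpoints of all the
previous edges. -/
def IsBridgeDeletionOrder {V : Type*} (G : SimpleGraph V) (L : List (Sym2 V)) : Prop :=
  ∀ i : Fin L.length,
    (GraphOn G {v | ∀ j : Fin L.length, j < i → v ∉ L.get j}).IsBridge (L.get i)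

/-- A blossom for `M` with root `r`: an odd cycle through `r` all of whose
vertices other than `r` are matched by edges of `M` lying on the cycle, while
`r` is not matched within the cycle. -/
def IsBlossom {V : Type*} {G : SimpleGraph V} (M : Set (Sym2 V)) {r : V}
    (C : G.Walk r r) : Prop :=
  C.IsCycle ∧ Odd C.length ∧
  (∀ x ∈ C.support, x ≠ r → ∃ e ∈ M, x ∈ e ∧ e ∈ C.edges) ∧
  (∀ e ∈ M, r ∈ e → e ∉ C.edges)

/-- `e` blossom-binds `f`: `e` is the stem (the matching edge incident to the
root) of some blossom for `M` containing `f`. -/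
def BlossomBinds {V : Type*} (G : SimpleGraph V) (M : Set (Sym2 V))
    (e f : Sym2 V) : Prop :=
  e ∈ M ∧ f ∈ M ∧ ∃ (r : V) (C : G.Walk r r), IsBlossom M C ∧ r ∈ e ∧ f ∈ C.edges

/-- If `e` blossom-binds `f` in a graph with unique perfect matching `M`, then
`e` occurs before `f` in every bridge-deletion ordering of `M`. -/
theorem stmt6 {V : Type*} [Fintype V] [DecidableEq V] (G : SimpleGraph V)
    (M : Set (Sym2 V)) (hM : IsPerfectMatching G M)
    (hU : ∀ M', IsPerfectMatching G M' → M' = M)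
    (e f : Sym2 V) (hbind : BlossomBinds G M e f)
    (L : List (Sym2 V)) (hnd : L.Nodup) (hcov : ∀ x, x ∈ L ↔ x ∈ M)
    (hL : IsBridgeDeletionOrder G L) :
    L.idxOf e < L.idxOf f := by
  classical
  obtain ⟨heM, hfM, r, C, ⟨hCcyc, hodd, hmatch, hroot⟩, hre, hfC⟩ := hbind
  by_contra hlt
  push_neg at hlt
  have heL : e ∈ L := (hcov e).mpr heM
  have hfL : f ∈ L := (hcov f).mpr hfM
  have heLlen : L.idxOf e < L.length := List.idxOf_lt_length_iff.2 heL
  have hfLlen : L.idxOf f < L.length := List.idxOf_lt_length_iff.2 hfL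
  have hef : e ≠ f := fun h => hroot f hfM (h ▸ hre) hfC
  have hflte : L.idxOf f < L.idxOf e := by
    rcases lt_or_eq_of_le hlt with h | h
    · exact h
    · exfalso
      apply hef
      have h1 := List.idxOf_get heLlen
      have h2 := List.idxOf_get hfLlen
      rw [← h1, ← h2]
      congr 1
      exact Fin.ext h.symm
  -- the earliest position of a matching edge of the cycle
  have hex : ∃ j, ∃ h : j < L.length, L.get ⟨j, h⟩ ∈ M ∧ L.get ⟨j, h⟩ ∈ C.edges := by
    refine ⟨L.idxOf f, hfLlen, ?_⟩
    rw [List.idxOf_get hfLlen]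
    exact ⟨hfM, hfC⟩
  set i := Nat.find hex with hidef
  obtain ⟨hilen, hgM, hgC⟩ := Nat.find_spec hex
  have hile : i ≤ L.idxOf f := Nat.find_min' hex ⟨hfLlen, by
    rw [List.idxOf_get hfLlen]; exact ⟨hfM, hfC⟩⟩
  set I : Fin L.length := ⟨i, hilen⟩ with hIdef
  have hbr := hL I
  set S : Set V := {v | ∀ j : Fin L.length, j < I → v ∉ L.get j} with hSdef
  -- every vertex of the cycle survives
  have hsup : ∀ x ∈ C.support, x ∈ S := by
    intro x hx j hj hxj
    have hjM : L.get j ∈ M := (hcov _).1 (L.get_mem _)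
    by_cases hxr : x = r
    · subst hxr
      obtain ⟨e', he', hu⟩ := hM.2 x
      have h1 : L.get j = e' := hu _ ⟨hjM, hxj⟩
      have h2 : e = e' := hu _ ⟨heM, hre⟩
      have hje : L.get j = L.get ⟨L.idxOf e, heLlen⟩ := by
        rw [List.idxOf_get heLlen, h1, h2]
      have := List.nodup_iff_injective_get.1 hnd hje
      have hjval : (j : ℕ) = L.idxOf e := congrArg Fin.val this
      have hjlt : (j : ℕ) < i := hj
      omega
    · obtain ⟨e', he'M, hxe', he'C⟩ := hmatch x hx hxr
      obtain ⟨e'', _, hu⟩ := hM.2 x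
      have h1 : L.get j = e'' := hu _ ⟨hjM, hxj⟩
      have h2 : e' = e'' := hu _ ⟨he'M, hxe'⟩
      have hjlt : (j : ℕ) < i := hj
      exact Nat.find_min hex hjlt ⟨j.2, by
        simp only [Fin.eta] at *
        rw [h1, ← h2]; exact ⟨he'M, he'C⟩⟩
  -- the cycle lives in the induced subgraph
  have hedges : ∀ e' ∈ C.edges, e' ∈ (GraphOn G S).edgeSet := by
    intro e' he'
    induction e' using Sym2.ind with
    | _ a b =>
      exact ⟨C.adj_of_mem_edges he', hsup a (C.fst_mem_support_of_mem_edges he'),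
        hsup b (C.snd_mem_support_of_mem_edges he')⟩
  have hC' : (C.transfer (GraphOn G S) hedges).IsCycle := hCcyc.transfer hedges
  rw [SimpleGraph.isBridge_iff_forall_cycle_notMem (hedges _ hgC)] at hbr
  refine hbr (C.transfer (GraphOn G S) hedges) hC' ?_
  rw [SimpleGraph.Walk.edges_transfer]
  exact hgC
end

section
/- Under the bijection between graphs with a perfect matching and locally 2-colored graphs, a graph with a perfect matching is bipartite if and only if the corresponding locally 2-colored graph arises from an orientation of its edges (i.e., every edge is red at one endpoint and blue at the other). -/
/-- A locally 2-colored (multi)graph (see the paper): each edge carries a color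
(`false` = red, `true` = blue) at each of its two endpoints. -/
structure Loc2Col (V : Type*) where
  A : V → V → Bool → Bool → Prop
  symm : ∀ u v i j, A u v i j → A v u j i
  ne : ∀ u v i j, A u v i j → u ≠ v

/-- The graph with perfect matching corresponding to a locally 2-colored graph
under the bijection: vertices `(u, i)` (the two copies `u_R`, `u_B` of `u`),
matching edges `(u,false)−(u,true)`, and an edge `(u,i)−(v,j)` for each
original edge colored `i` at `u` and `j` at `v`. -/
def toPM {V : Type*} (L : Loc2Col V) : SimpleGraph (V × Bool) where
  Adj x y := (x.1 = y.1 ∧ x.2 ≠ y.2) ∨ L.A x.1 y.1 x.2 y.2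
  symm := by
    constructor
    rintro ⟨u, i⟩ ⟨v, j⟩ (⟨h1, h2⟩ | h)
    · exact Or.inl ⟨h1.symm, h2.symm⟩
    · exact Or.inr (L.symm _ _ _ _ h)
  loopless := by
    constructor
    rintro ⟨u, i⟩ (⟨_, h⟩ | h)
    · exact h rfl
    · exact (L.ne _ _ _ _ h) rfl

/-- Under the bijection between graphs with a perfect matching and locally
2-colored graphs, the graph with perfect matching is bipartite iff the locally
2-colored graph arises (up to isomorphism compatible with the bijection) from
an orientation of its edges, i.e. every edge is red at exactly one endpoint. -/
theorem stmt12 {V : Type*} [Fintype V] (L : Loc2Col V) :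
    (toPM L).Colorable 2 ↔
      ∃ L' : Loc2Col V, (∀ u v i j, L'.A u v i j → i ≠ j) ∧
        Nonempty (toPM L ≃g toPM L') := by
  constructor
  · rintro ⟨C⟩
    set f : V → Bool := fun u => decide (C (u, false) = 1) with hf
    have hdec : ∀ a b : Fin 2, a ≠ b → decide (a = 1) ≠ decide (b = 1) := by decide
    have hg : ∀ u (i : Bool), decide (C (u, i) = 1) = xor i (f u) := by
      intro u i
      cases i
      · simp [hf]
      · have h01 : C (u, false) ≠ C (u, true) :=
          C.valid (Or.inl ⟨rfl, by simp⟩)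
        have := hdec _ _ h01
        simp only [hf]
        cases h : decide (C (u, false) = 1) <;> rw [h] at this <;>
          revert this <;> cases decide (C (u, true) = 1) <;> simp
    refine ⟨⟨fun u v i j => L.A u v (xor i (f u)) (xor j (f v)),
      fun u v i j h => L.symm _ _ _ _ h, fun u v i j h => L.ne _ _ _ _ h⟩,
      ?_, ⟨⟨⟨fun x => (x.1, xor x.2 (f x.1)), fun x => (x.1, xor x.2 (f x.1)),
        ?_, ?_⟩, ?_⟩⟩⟩
    · intro u v i j h
      have hne : C (u, xor i (f u)) ≠ C (v, xor j (f v)) := C.valid (Or.inr h)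
      have := hdec _ _ hne
      rw [hg, hg] at this
      intro hij
      subst hij
      revert this
      cases i <;> cases f u <;> cases f v <;> simp
    · rintro ⟨u, i⟩; simp [Bool.xor_assoc]
    · rintro ⟨u, i⟩; simp [Bool.xor_assoc]
    · rintro ⟨u, i⟩ ⟨v, j⟩
      show ((u = v ∧ xor i (f u) ≠ xor j (f v)) ∨
          L.A u v (xor (xor i (f u)) (f u)) (xor (xor j (f v)) (f v))) ↔ _
      simp only [Bool.xor_assoc, Bool.xor_self, Bool.xor_false]
      constructor
      · rintro (⟨rfl, h⟩ | h)
        · exact Or.inl ⟨rfl, fun hij => h (congrArg (fun b => xor b (f u)) hij)⟩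
        · exact Or.inr h
      · rintro (⟨rfl, h⟩ | h)
        · refine Or.inl ⟨rfl, fun hc => h ?_⟩
          revert hc; cases i <;> cases j <;> cases f u <;> simp
        · exact Or.inr h
  · rintro ⟨L', hL', ⟨e⟩⟩
    refine ⟨(SimpleGraph.Coloring.mk (fun x : V × Bool => if x.2 then (1 : Fin 2) else 0)
      ?_).comp e.toHom⟩
    rintro ⟨u, i⟩ ⟨v, j⟩ (⟨_, h⟩ | h)
    · revert h; cases i <;> cases j <;> simp
    · have := hL' _ _ _ _ h
      revert this; cases i <;> cases j <;> simp
end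

section
/- Let G be an arc-colored directed graph and s, t vertices of G. If there exists a properly colored directed walk from s to t, then there exists a properly colored directed trail from s to t whose arc set is contained in the arc set of the walk. -/
/-- A properly colored directed walk from `s` to `t` in the arc-colored digraph
`(D, c)`, encoded as the list of its arcs (pairs tail/head): every element is
an arc of `D`, the head of each arc is the tail of the next, consecutive arcs
have different colors, the walk starts at `s` and ends at `t` (an empty walk is
allowed only when `s = t`). -/
def IsPCWalk {V α : Type*} (D : V → V → Prop) (c : V → V → α) (s t : V)
    (L : List (V × V)) : Prop :=
  (∀ p ∈ L, D p.1 p.2) ∧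
  List.Chain' (fun p q => p.2 = q.1) L ∧
  List.Chain' (fun p q => c p.1 p.2 ≠ c q.1 q.2) L ∧
  (∀ p ∈ L.head?, p.1 = s) ∧ (∀ p ∈ L.getLast?, p.2 = t) ∧
  (L = [] → s = t)

lemma exists_dup' {β : Type*} {L : List β} (h : ¬ L.Nodup) :
    ∃ (p : β) (l1 l2 l3 : List β), L = l1 ++ p :: (l2 ++ p :: l3) := by
  induction L with
  | nil => simp at h
  | cons a L ih =>
    by_cases ha : a ∈ L
    · obtain ⟨l2, l3, rfl⟩ := List.append_of_mem ha
      exact ⟨a, [], l2, l3, rfl⟩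
    · have hnd : ¬ L.Nodup := by simp [List.nodup_cons] at h; tauto
      obtain ⟨p, l1, l2, l3, rfl⟩ := ih hnd
      exact ⟨p, a :: l1, l2, l3, rfl⟩

lemma chain'_shorten {β : Type*} {R : β → β → Prop} {A l2 l3 : List β} {p : β}
    (h : List.Chain' R (A ++ p :: (l2 ++ p :: l3))) :
    List.Chain' R (A ++ p :: l3) := by
  have h' : List.Chain' R (A ++ ((p :: l2) ++ (p :: l3))) := by simpa using h
  unfold List.Chain' at h' ⊢; rw [List.isChain_append] at h'
  obtain ⟨hA, hBC, hlink⟩ := h'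
  rw [List.isChain_append] at hBC
  rw [List.isChain_append]
  refine ⟨hA, hBC.2.1, ?_⟩
  intro x hx y hy
  exact hlink x hx y (by simpa using hy)

lemma pcwalk_shorten {V α : Type*} (D : V → V → Prop) (c : V → V → α) (s t : V)
    (l1 l2 l3 : List (V × V)) (p : V × V)
    (hL : IsPCWalk D c s t (l1 ++ p :: (l2 ++ p :: l3))) :
    IsPCWalk D c s t (l1 ++ p :: l3) := by
  obtain ⟨hD, hch, hcol, hhd, hlast, hne⟩ := hL
  refine ⟨?_, chain'_shorten hch, chain'_shorten hcol, ?_, ?_, ?_⟩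
  · intro q hq; apply hD; simp at hq ⊢; tauto
  · intro q hq
    apply hhd
    cases l1 <;> simp_all
  · intro q hq
    apply hlast
    rw [List.getLast?_append_cons] at hq ⊢
    have : (p :: (l2 ++ p :: l3)).getLast? = (p :: l3).getLast? := by
      show ((p :: l2) ++ p :: l3).getLast? = _
      rw [List.getLast?_append_cons]
    rw [this]; exact hq
  · intro h; simp at h

lemma stmt18_aux {V α : Type*} (D : V → V → Prop) (c : V → V → α) (s t : V) :
    ∀ n (L : List (V × V)), L.length ≤ n → IsPCWalk D c s t L →
    ∃ L' : List (V × V), IsPCWalk D c s t L' ∧ L'.Nodup ∧ ∀ p ∈ L', p ∈ L := by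
  intro n
  induction n with
  | zero =>
    intro L hlen hL
    have : L = [] := List.length_eq_zero_iff.mp (Nat.le_zero.mp hlen)
    subst this
    exact ⟨[], hL, List.nodup_nil, by simp⟩
  | succ n ih =>
    intro L hlen hL
    by_cases hnd : L.Nodup
    · exact ⟨L, hL, hnd, fun p hp => hp⟩
    · obtain ⟨p, l1, l2, l3, rfl⟩ := exists_dup' hnd
      have hL' := pcwalk_shorten D c s t l1 l2 l3 p hL
      have hlen' : (l1 ++ p :: l3).length ≤ n := by
        simp only [List.length_append, List.length_cons] at hlen ⊢
        omega
      obtain ⟨L'', h1, h2, h3⟩ := ih (l1 ++ p :: l3) hlen' hL'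
      refine ⟨L'', h1, h2, fun q hq => ?_⟩
      have := h3 q hq
      simp at this ⊢
      tauto

/-- If there is a properly colored directed walk from `s` to `t`, then there is
a properly colored directed trail (walk with no repeated arc) from `s` to `t`
whose arcs all come from the walk. -/
theorem stmt18 {V α : Type*} (D : V → V → Prop) (c : V → V → α) (s t : V)
    (L : List (V × V)) (hL : IsPCWalk D c s t L) :
    ∃ L' : List (V × V), IsPCWalk D c s t L' ∧ L'.Nodup ∧ ∀ p ∈ L', p ∈ L :=
  stmt18_aux D c s t L.length L le_rfl hL
end
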